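/- arXiv:1202.3312 — 2 statements merged into one kernel-verified Lean document; each statement's English description precedes it below -/
import Mathlib

section
/- Let H be a Hopf algebra over a field k with antipode S, A a left H-comodule algebra, δ : H → k a character and σ ∈ H a group-like element. If (δ,σ) is a modular pair (δ(σ)=1) which is ^A H-in involution, i.e. σ⁻¹ S_δ²(a₍₋₁₎) σ ⊗ a₍₀₎ = a₍₋₁₎ ⊗ a₍₀₎ for all a ∈ A, then the one-dimensional module-comodule ^σk_δ is an ^A H-SAYD module. -/
open TensorProduct LinearMap

noncomputable section
namespace HCN

variable (k : Type) [Field k]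

section Shortcuts
variable (X Y Z W : Type) [AddCommGroup X] [Module k X] [AddCommGroup Y] [Module k Y]
  [AddCommGroup Z] [Module k Z] [AddCommGroup W] [Module k W]
abbrev cmm : X ⊗[k] Y →ₗ[k] Y ⊗[k] X := (TensorProduct.comm k X Y).toLinearMap
abbrev asc : (X ⊗[k] Y) ⊗[k] Z →ₗ[k] X ⊗[k] (Y ⊗[k] Z) := (TensorProduct.assoc k X Y Z).toLinearMap
abbrev ascs : X ⊗[k] (Y ⊗[k] Z) →ₗ[k] (X ⊗[k] Y) ⊗[k] Z := (TensorProduct.assoc k X Y Z).symm.toLinearMap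
abbrev mid4 : (X ⊗[k] Y) ⊗[k] (Z ⊗[k] W) →ₗ[k] (X ⊗[k] Z) ⊗[k] (Y ⊗[k] W) :=
  (TensorProduct.tensorTensorTensorComm k X Y Z W).toLinearMap
end Shortcuts

section Mul
variable (H : Type) [AddCommGroup H] [Module k H]
def opMul (μ : H ⊗[k] H →ₗ[k] H) : H ⊗[k] H →ₗ[k] H := μ ∘ₗ cmm k H H
def lmulBy (μ : H ⊗[k] H →ₗ[k] H) (h : H) : H →ₗ[k] H := μ ∘ₗ TensorProduct.mk k H H h
def rmulBy (μ : H ⊗[k] H →ₗ[k] H) (h : H) : H →ₗ[k] H := μ ∘ₗ (TensorProduct.mk k H H).flip h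
variable {H}
variable {V W : Type} [AddCommGroup V] [Module k V] [AddCommGroup W] [Module k W]
def diagL (μ : H ⊗[k] H →ₗ[k] H) (ρV : V →ₗ[k] H ⊗[k] V) (ρW : W →ₗ[k] H ⊗[k] W) :
    (V ⊗[k] W) →ₗ[k] H ⊗[k] (V ⊗[k] W) :=
  (μ.rTensor (V ⊗[k] W)) ∘ₗ mid4 k H V H W ∘ₗ (TensorProduct.map ρV ρW)
def diagR (μ : H ⊗[k] H →ₗ[k] H) (ρV : V →ₗ[k] V ⊗[k] H) (ρW : W →ₗ[k] W ⊗[k] H) :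
    (V ⊗[k] W) →ₗ[k] (V ⊗[k] W) ⊗[k] H :=
  (μ.lTensor (V ⊗[k] W)) ∘ₗ mid4 k V H W H ∘ₗ (TensorProduct.map ρV ρW)
end Mul

section TpowSec
variable (A : Type) [AddCommGroup A] [Module k A]
def Tpow : ℕ → ModuleCat k
  | 0 => ModuleCat.of k k
  | n+1 => ModuleCat.of k (A ⊗[k] (Tpow n : Type))

/-- the linear equivalence extracting the *last* tensor factor of `Tpow k A (n+1)`. -/
def epow : ∀ n : ℕ, (Tpow k A (n+1) : Type) ≃ₗ[k] (Tpow k A n : Type) ⊗[k] A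
  | 0 => TensorProduct.comm k A k
  | n+1 => (LinearEquiv.lTensor A (epow n)).trans
      (TensorProduct.assoc k A (Tpow k A n : Type) A).symm
end TpowSec

section TrivCoact
variable (H : Type) [Ring H] [Algebra k H]
variable (M : Type) [AddCommGroup M] [Module k M]
/-- the trivial left coaction `m ↦ 1 ⊗ m`. -/
def trivL : M →ₗ[k] H ⊗[k] M := TensorProduct.mk k H M 1
/-- the trivial right coaction `m ↦ m ⊗ 1`. -/
def trivR : M →ₗ[k] M ⊗[k] H := (TensorProduct.mk k M H).flip 1
/-- the trivial right action `m ⊗ h ↦ ε(h) m` associated to a counit map `ε`. -/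
def trivAct (ε : H →ₗ[k] k) : M ⊗[k] H →ₗ[k] M :=
  (TensorProduct.rid k M).toLinearMap ∘ₗ (ε.lTensor M)
end TrivCoact

section TpowCoact
variable {H : Type} [Ring H] [Algebra k H]
variable {A : Type} [AddCommGroup A] [Module k A]

/-- the diagonal left coaction on `Tpow k A n` induced by a left coaction on `A`
(with respect to a multiplication map `μ` on `H`). -/
def TpowρL (μ : H ⊗[k] H →ₗ[k] H) (ρA : A →ₗ[k] H ⊗[k] A) :
    ∀ n : ℕ, (Tpow k A n : Type) →ₗ[k] H ⊗[k] (Tpow k A n : Type)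
  | 0 => trivL k H k
  | n+1 => diagL k μ ρA (TpowρL μ ρA n)

/-- the diagonal right coaction on `Tpow k A n` induced by a right coaction on `A`. -/
def TpowρR (μ : H ⊗[k] H →ₗ[k] H) (ρA : A →ₗ[k] A ⊗[k] H) :
    ∀ n : ℕ, (Tpow k A n : Type) →ₗ[k] (Tpow k A n : Type) ⊗[k] H
  | 0 => trivR k H k
  | n+1 => diagR k μ ρA (TpowρR μ ρA n)

end TpowCoact

section TwistSec
variable {H M : Type} [AddCommGroup H] [Module k H] [AddCommGroup M] [Module k M]

/-- the anti-Yetter--Drinfeld twist map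
`h ⊗ (g ⊗ m) ↦ S(h⁽³⁾) g h⁽¹⁾ ⊗ m · h⁽²⁾`, expressed diagrammatically in terms of a
multiplication `μ`, a comultiplication `Δ` and an antipode `S` of `H` and a right action
`act` of `H` on `M`. -/
def Twist (μ : H ⊗[k] H →ₗ[k] H) (Δ : H →ₗ[k] H ⊗[k] H) (S : H →ₗ[k] H)
    (act : M ⊗[k] H →ₗ[k] M) : H ⊗[k] (H ⊗[k] M) →ₗ[k] H ⊗[k] M :=
  letI Δ₂ : H →ₗ[k] H ⊗[k] (H ⊗[k] H) := (Δ.lTensor H) ∘ₗ Δ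
  letI actc : H ⊗[k] M →ₗ[k] M := act ∘ₗ cmm k H M
  letI sm : H ⊗[k] H →ₗ[k] H := opMul k H μ
  letI u : (H ⊗[k] H) ⊗[k] M →ₗ[k] H ⊗[k] M :=
    (S.rTensor M) ∘ₗ (actc.lTensor H) ∘ₗ asc k H H M ∘ₗ ((cmm k H H).rTensor M)
  (sm.rTensor M) ∘ₗ ascs k H H M ∘ₗ (u.lTensor H) ∘ₗ
    (sm.rTensor ((H ⊗[k] H) ⊗[k] M)) ∘ₗ mid4 k H (H ⊗[k] H) H M ∘ₗ (Δ₂.rTensor (H ⊗[k] M))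

/-- the right-coaction version of the anti-Yetter--Drinfeld twist map:
`(m ⊗ g) ⊗ h ↦ m · h⁽²⁾ ⊗ S(h⁽³⁾) g h⁽¹⁾`. -/
def TwistR (μ : H ⊗[k] H →ₗ[k] H) (Δ : H →ₗ[k] H ⊗[k] H) (S : H →ₗ[k] H)
    (act : M ⊗[k] H →ₗ[k] M) : (M ⊗[k] H) ⊗[k] H →ₗ[k] M ⊗[k] H :=
  cmm k H M ∘ₗ Twist k μ Δ S act ∘ₗ ((cmm k M H).lTensor H) ∘ₗ cmm k (M ⊗[k] H) H

end TwistSec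

section ComodLaws
variable {H : Type} [Ring H] [Bialgebra k H]
variable {V : Type} [AddCommGroup V] [Module k V]

/-- coassociativity of a left `H`-coaction. -/
def IsCoassocL (ρ : V →ₗ[k] H ⊗[k] V) : Prop :=
  ρ.lTensor H ∘ₗ ρ = asc k H H V ∘ₗ ((Coalgebra.comul (R := k) (A := H)).rTensor V) ∘ₗ ρ

/-- counitality of a left `H`-coaction. -/
def IsCounitalL (ρ : V →ₗ[k] H ⊗[k] V) : Prop :=
  (TensorProduct.lid k V).toLinearMap ∘ₗ ((Coalgebra.counit (R := k) (A := H)).rTensor V) ∘ₗ ρ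
    = LinearMap.id

/-- coassociativity of a right `H`-coaction. -/
def IsCoassocR (ρ : V →ₗ[k] V ⊗[k] H) : Prop :=
  ρ.rTensor H ∘ₗ ρ = ascs k V H H ∘ₗ ((Coalgebra.comul (R := k) (A := H)).lTensor V) ∘ₗ ρ

/-- counitality of a right `H`-coaction. -/
def IsCounitalR (ρ : V →ₗ[k] V ⊗[k] H) : Prop :=
  (TensorProduct.rid k V).toLinearMap ∘ₗ ((Coalgebra.counit (R := k) (A := H)).lTensor V) ∘ₗ ρ
    = LinearMap.id

end ComodLaws

section ComodAlg
variable {H : Type} [Ring H] [Bialgebra k H]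

/-- `A` is a left `H`-comodule algebra via the coaction `ρ`:  `ρ` is a counital coassociative
coaction which is moreover a morphism of unital algebras. -/
def IsComodAlgL {A : Type} [Ring A] [Algebra k A] (ρ : A →ₗ[k] H ⊗[k] A) : Prop :=
  IsCoassocL k ρ ∧ IsCounitalL k ρ ∧ ρ 1 = 1 ∧ ∀ a b : A, ρ (a * b) = ρ a * ρ b

/-- `A` is a right `H`-comodule algebra via the coaction `ρ`. -/
def IsComodAlgR {A : Type} [Ring A] [Algebra k A] (ρ : A →ₗ[k] A ⊗[k] H) : Prop :=
  IsCoassocR k ρ ∧ IsCounitalR k ρ ∧ ρ 1 = 1 ∧ ∀ a b : A, ρ (a * b) = ρ a * ρ b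

/-- `C` is a right `H`-comodule coalgebra via the coaction `ρ`:  `ρ` is a counital
coassociative coaction which is moreover a morphism of coalgebras, i.e.
`c₍₀₎⁽¹⁾ ⊗ c₍₀₎⁽²⁾ ⊗ c₍₁₎ = c⁽¹⁾₍₀₎ ⊗ c⁽²⁾₍₀₎ ⊗ c⁽¹⁾₍₁₎c⁽²⁾₍₁₎` and `ε(c₍₀₎)c₍₁₎ = ε(c)1`. -/
def IsComodCoalgR {C : Type} [AddCommGroup C] [Module k C] [Coalgebra k C]
    (ρ : C →ₗ[k] C ⊗[k] H) : Prop :=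
  IsCoassocR k ρ ∧ IsCounitalR k ρ
  ∧ ((Coalgebra.comul (R := k) (A := C)).rTensor H) ∘ₗ ρ
      = ((LinearMap.mul' k H).lTensor (C ⊗[k] C)) ∘ₗ mid4 k C H C H
          ∘ₗ (TensorProduct.map ρ ρ) ∘ₗ (Coalgebra.comul (R := k) (A := C))
  ∧ (TensorProduct.lid k H).toLinearMap ∘ₗ ((Coalgebra.counit (R := k) (A := C)).rTensor H) ∘ₗ ρ
      = (Algebra.linearMap k H) ∘ₗ (Coalgebra.counit (R := k) (A := C))

end ComodAlg

section Actions
variable {H : Type} [Ring H] [Algebra k H]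
variable {M : Type} [AddCommGroup M] [Module k M]

/-- `act` is a unital associative right action of the algebra `H` on `M`. -/
def IsRAct (act : M ⊗[k] H →ₗ[k] M) : Prop :=
  (∀ m : M, act (m ⊗ₜ[k] 1) = m) ∧
    ∀ (m : M) (g h : H), act (act (m ⊗ₜ[k] g) ⊗ₜ[k] h) = act (m ⊗ₜ[k] (g * h))

/-- `act` is a unital associative right action of `(H, μ, e)` on `M` where the
multiplication `μ` and unit `e` are given explicitly. -/
def IsRActμ (μ : H ⊗[k] H →ₗ[k] H) (e : H) (act : M ⊗[k] H →ₗ[k] M) : Prop :=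
  (∀ m : M, act (m ⊗ₜ[k] e) = m) ∧
    ∀ (m : M) (g h : H), act (act (m ⊗ₜ[k] g) ⊗ₜ[k] h) = act (m ⊗ₜ[k] μ (g ⊗ₜ[k] h))

end Actions

section ModAlg
variable {H : Type} [Ring H] [Bialgebra k H]

/-- `β` is a left action of the bialgebra `H` on `A` making `A` a left `H`-module algebra. -/
def IsModuleAlgL {A : Type} [Ring A] [Algebra k A]
    (β : H ⊗[k] A →ₗ[k] A) : Prop :=
  (∀ a : A, β (1 ⊗ₜ[k] a) = a)
  ∧ (∀ (g h : H) (a : A), β (g ⊗ₜ[k] β (h ⊗ₜ[k] a)) = β ((g * h) ⊗ₜ[k] a))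
  ∧ (β ∘ₗ ((LinearMap.mul' k A).lTensor H)
      = (LinearMap.mul' k A) ∘ₗ (TensorProduct.map β β) ∘ₗ mid4 k H H A A
          ∘ₗ ((Coalgebra.comul (R := k) (A := H)).rTensor (A ⊗[k] A)))
  ∧ (∀ h : H, β (h ⊗ₜ[k] (1 : A)) = (Coalgebra.counit (R := k) (A := H) h) • (1 : A))

end ModAlg

section LeftSAYD
variable {H : Type} [Ring H] [HopfAlgebra k H]
variable {A M : Type} [AddCommGroup A] [Module k A] [AddCommGroup M] [Module k M]

/-- colinearity of `φ : V → M` with respect to left `H`-coactions. -/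
def IsColinL {V : Type} [AddCommGroup V] [Module k V]
    (ρV : V →ₗ[k] H ⊗[k] V) (ρM : M →ₗ[k] H ⊗[k] M) (φ : V →ₗ[k] M) : Prop :=
  ρM ∘ₗ φ = φ.lTensor H ∘ₗ ρV

/-- the `^A H`-anti-Yetter--Drinfeld condition for a colinear map `φ : A ⊗ W → M`:
`(φ(a₍₀₎ ⊗ w) · a₍₋₁₎)₍₋₁₎ ⊗ (φ(a₍₀₎ ⊗ w) · a₍₋₁₎)₍₀₎
  = S(a₍₋₁₎⁽³⁾) φ(a₍₀₎ ⊗ w)₍₋₁₎ a₍₋₁₎⁽¹⁾ ⊗ φ(a₍₀₎ ⊗ w)₍₀₎ · a₍₋₁₎⁽²⁾`. -/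
def AYDcondL {W : Type} [AddCommGroup W] [Module k W]
    (ρA : A →ₗ[k] H ⊗[k] A) (ρM : M →ₗ[k] H ⊗[k] M) (act : M ⊗[k] H →ₗ[k] M)
    (φ : (A ⊗[k] W) →ₗ[k] M) : Prop :=
  ρM ∘ₗ act ∘ₗ cmm k H M ∘ₗ (φ.lTensor H) ∘ₗ asc k H A W ∘ₗ (ρA.rTensor W)
  = Twist k (LinearMap.mul' k H) (Coalgebra.comul (R := k)) (HopfAlgebra.antipode (R := k)) act
      ∘ₗ ((ρM ∘ₗ φ).lTensor H) ∘ₗ asc k H A W ∘ₗ (ρA.rTensor W)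

/-- the stability condition for a map `φ : V → M`:  `φ(v₍₀₎) · v₍₋₁₎ = φ(v)`. -/
def StabCondL {V : Type} [AddCommGroup V] [Module k V]
    (ρV : V →ₗ[k] H ⊗[k] V) (act : M ⊗[k] H →ₗ[k] M) (φ : V →ₗ[k] M) : Prop :=
  act ∘ₗ cmm k H M ∘ₗ (φ.lTensor H) ∘ₗ ρV = φ

/-- `M` (a module and comodule over `H`) is an `^A H`-SAYD module for the left `H`-comodule
(algebra) `A`:  every `H`-colinear map `φ : A^{⊗(n+1)} → M` (with respect to the diagonal
coaction) satisfies the `^A H`-AYD and stability conditions. -/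
def IsAHSAYDL (ρA : A →ₗ[k] H ⊗[k] A) (ρM : M →ₗ[k] H ⊗[k] M)
    (act : M ⊗[k] H →ₗ[k] M) : Prop :=
  ∀ n : ℕ, ∀ φ : (A ⊗[k] (Tpow k A n : Type)) →ₗ[k] M,
    IsColinL k (TpowρL k (LinearMap.mul' k H) ρA (n + 1)) ρM φ →
      AYDcondL k ρA ρM act φ ∧ StabCondL k (TpowρL k (LinearMap.mul' k H) ρA (n + 1)) act φ

/-- the left-coaction rotation map on `Tpow k A (n+1)`:
`a₀ ⊗ ⋯ ⊗ aₙ ↦ aₙ₍₋₁₎ ⊗ (aₙ₍₀₎ ⊗ a₀ ⊗ ⋯ ⊗ aₙ₋₁)`. -/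
def rotρL (ρA : A →ₗ[k] H ⊗[k] A) (n : ℕ) :
    (Tpow k A (n+1) : Type) →ₗ[k] H ⊗[k] (Tpow k A (n+1) : Type) :=
  asc k H A (Tpow k A n : Type) ∘ₗ cmm k (Tpow k A n : Type) (H ⊗[k] A)
    ∘ₗ (ρA.lTensor (Tpow k A n : Type)) ∘ₗ (epow k A n).toLinearMap

/-- the cyclic operator `τₙ` on `Hom(A^{⊗(n+1)}, M)`:
`(τₙ f)(a₀ ⊗ ⋯ ⊗ aₙ) = f(aₙ₍₀₎ ⊗ a₀ ⊗ ⋯ ⊗ aₙ₋₁) · aₙ₍₋₁₎`. -/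
def tauL (ρA : A →ₗ[k] H ⊗[k] A) (act : M ⊗[k] H →ₗ[k] M) (n : ℕ)
    (φ : (Tpow k A (n+1) : Type) →ₗ[k] M) : (Tpow k A (n+1) : Type) →ₗ[k] M :=
  act ∘ₗ cmm k H M ∘ₗ (φ.lTensor H) ∘ₗ rotρL k ρA n

/-- `M` is an `^A H`-HCC (Hopf cyclic coefficients) for the left `H`-comodule algebra `A`:
the cyclic operator `τₙ` is well defined on the `H`-colinear maps `A^{⊗(n+1)} → M`
(so the whole cocyclic structure is well defined) and satisfies `τₙ^{n+1} = id`, making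
`Hom^H(A^{⊗(n+1)}, M)` a cocyclic module. -/
def IsAHHCCL (ρA : A →ₗ[k] H ⊗[k] A) (ρM : M →ₗ[k] H ⊗[k] M)
    (act : M ⊗[k] H →ₗ[k] M) : Prop :=
  ∀ n : ℕ, ∀ φ : (Tpow k A (n+1) : Type) →ₗ[k] M,
    IsColinL k (TpowρL k (LinearMap.mul' k H) ρA (n + 1)) ρM φ →
      IsColinL k (TpowρL k (LinearMap.mul' k H) ρA (n + 1)) ρM (tauL k ρA act n φ)
      ∧ (tauL k ρA act n)^[n+1] φ = φ

/-- `M` is a (right-left) stable anti-Yetter--Drinfeld module over `H`: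
`(m·h)₍₋₁₎ ⊗ (m·h)₍₀₎ = S(h⁽³⁾) m₍₋₁₎ h⁽¹⁾ ⊗ m₍₀₎ · h⁽²⁾` and `m₍₀₎ · m₍₋₁₎ = m`. -/
def IsSAYD (ρM : M →ₗ[k] H ⊗[k] M) (act : M ⊗[k] H →ₗ[k] M) : Prop :=
  (ρM ∘ₗ act
    = Twist k (LinearMap.mul' k H) (Coalgebra.comul (R := k)) (HopfAlgebra.antipode (R := k)) act
        ∘ₗ (ρM.lTensor H) ∘ₗ cmm k M H)
  ∧ act ∘ₗ cmm k H M ∘ₗ ρM = LinearMap.id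

end LeftSAYD
section Characters
variable {H : Type} [Ring H] [HopfAlgebra k H]

/-- `σ` is a group-like element of `H`. -/
def IsGrouplike (σ : H) : Prop :=
  Coalgebra.comul (R := k) σ = σ ⊗ₜ[k] σ ∧ Coalgebra.counit (R := k) σ = 1

/-- the `δ`-twisted antipode `S_δ(h) = δ(h⁽¹⁾) S(h⁽²⁾)` of a character `δ : H → k`. -/
def Sdelta (δ : H →ₐ[k] k) : H →ₗ[k] H :=
  (TensorProduct.lid k H).toLinearMap
    ∘ₗ (TensorProduct.map δ.toLinearMap (HopfAlgebra.antipode (R := k)))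
    ∘ₗ (Coalgebra.comul (R := k))

/-- the right action of `H` on `k` through a character `δ` : `x · h = δ(h) x`. -/
def actChar (δ : H →ₐ[k] k) : k ⊗[k] H →ₗ[k] k :=
  (TensorProduct.lid k k).toLinearMap ∘ₗ (δ.toLinearMap.lTensor k)

/-- the left coaction of `H` on `k` given by a (group-like) element `σ` : `x ↦ σ ⊗ x`. -/
def coactGrouplike (σ : H) : k →ₗ[k] H ⊗[k] k := TensorProduct.mk k H k σ

end Characters

section RightSAYD
/- The right-coaction versions, with the Hopf structure maps `μ`, `Δ`, `S` given explicitly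
(so that they can be applied to the bicrossed product Hopf algebra structure on `F ⊗ U`). -/
variable {H : Type} [Ring H] [Algebra k H]
variable {A M : Type} [AddCommGroup A] [Module k A] [AddCommGroup M] [Module k M]

/-- colinearity of `φ : V → M` with respect to right `H`-coactions. -/
def IsColinR {V : Type} [AddCommGroup V] [Module k V]
    (ρV : V →ₗ[k] V ⊗[k] H) (ρM : M →ₗ[k] M ⊗[k] H) (φ : V →ₗ[k] M) : Prop :=
  ρM ∘ₗ φ = φ.rTensor H ∘ₗ ρV

/-- the canonical map `A ⊗ W → (A ⊗ W) ⊗ H`, `a ⊗ w ↦ (a₍₀₎ ⊗ w) ⊗ a₍₁₎`,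
coacting on the first tensor factor only. -/
def coactFirstR {W : Type} [AddCommGroup W] [Module k W] (ρA : A →ₗ[k] A ⊗[k] H) :
    (A ⊗[k] W) →ₗ[k] (A ⊗[k] W) ⊗[k] H :=
  ascs k A W H ∘ₗ ((cmm k H W).lTensor A) ∘ₗ asc k A H W ∘ₗ (ρA.rTensor W)

/-- the right-coaction version of the `^A H`-anti-Yetter--Drinfeld condition for a
colinear map `φ : A ⊗ W → M`. -/
def AYDcondR {W : Type} [AddCommGroup W] [Module k W]
    (μ : H ⊗[k] H →ₗ[k] H) (Δ : H →ₗ[k] H ⊗[k] H) (S : H →ₗ[k] H)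
    (ρA : A →ₗ[k] A ⊗[k] H) (ρM : M →ₗ[k] M ⊗[k] H) (act : M ⊗[k] H →ₗ[k] M)
    (φ : (A ⊗[k] W) →ₗ[k] M) : Prop :=
  ρM ∘ₗ act ∘ₗ (φ.rTensor H) ∘ₗ coactFirstR k ρA
  = TwistR k μ Δ S act ∘ₗ ((ρM ∘ₗ φ).rTensor H) ∘ₗ coactFirstR k ρA

/-- the right-coaction stability condition : `φ(v₍₀₎) · v₍₁₎ = φ(v)`. -/
def StabCondR {V : Type} [AddCommGroup V] [Module k V]
    (ρV : V →ₗ[k] V ⊗[k] H) (act : M ⊗[k] H →ₗ[k] M) (φ : V →ₗ[k] M) : Prop :=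
  act ∘ₗ (φ.rTensor H) ∘ₗ ρV = φ

/-- `M` is an `^A H`-SAYD module for a *right* `H`-comodule (algebra) `A`, where the Hopf
structure maps `μ`, `Δ`, `S` of `H` are given explicitly. -/
def IsAHSAYDR (μ : H ⊗[k] H →ₗ[k] H) (Δ : H →ₗ[k] H ⊗[k] H) (S : H →ₗ[k] H)
    (ρA : A →ₗ[k] A ⊗[k] H) (ρM : M →ₗ[k] M ⊗[k] H) (act : M ⊗[k] H →ₗ[k] M) : Prop :=
  ∀ n : ℕ, ∀ φ : (A ⊗[k] (Tpow k A n : Type)) →ₗ[k] M,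
    IsColinR k (TpowρR k μ ρA (n + 1)) ρM φ →
      AYDcondR k μ Δ S ρA ρM act φ ∧ StabCondR k (TpowρR k μ ρA (n + 1)) act φ

end RightSAYD
section CotensorSide
variable {H : Type} [Ring H] [HopfAlgebra k H]
variable {C M : Type} [AddCommGroup C] [Module k C] [AddCommGroup M] [Module k M]

/-- the cotensor defect map `V ⊗ M → V ⊗ (H ⊗ M)`, whose kernel is the cotensor product
`V □_H M` of a right `H`-comodule `V` and a left `H`-comodule `M`. -/
def cotensorDefect {V : Type} [AddCommGroup V] [Module k V]
    (ρV : V →ₗ[k] V ⊗[k] H) (ρM : M →ₗ[k] H ⊗[k] M) :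
    V ⊗[k] M →ₗ[k] V ⊗[k] (H ⊗[k] M) :=
  asc k V H M ∘ₗ (ρV.rTensor M) - (ρM.lTensor V)

/-- the map `v ⊗ m ↦ v₍₀₎ ⊗ m · v₍₁₎`. -/
def stabMapC {V : Type} [AddCommGroup V] [Module k V]
    (ρV : V →ₗ[k] V ⊗[k] H) (act : M ⊗[k] H →ₗ[k] M) : V ⊗[k] M →ₗ[k] V ⊗[k] M :=
  ((act ∘ₗ cmm k H M).lTensor V) ∘ₗ asc k V H M ∘ₗ (ρV.rTensor M)

/-- the `H^C`-anti-Yetter--Drinfeld condition: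
`c₍₀₎ ⊗ (m·c₍₁₎)₍₋₁₎ ⊗ (m·c₍₁₎)₍₀₎ = c₍₀₎ ⊗ S(c₍₁₎⁽³⁾) m₍₋₁₎ c₍₁₎⁽¹⁾ ⊗ m₍₀₎ · c₍₁₎⁽²⁾`. -/
def AYDcondC (ρC : C →ₗ[k] C ⊗[k] H) (ρM : M →ₗ[k] H ⊗[k] M)
    (act : M ⊗[k] H →ₗ[k] M) : Prop :=
  ((ρM ∘ₗ act ∘ₗ cmm k H M).lTensor C) ∘ₗ asc k C H M ∘ₗ (ρC.rTensor M)
  = ((Twist k (LinearMap.mul' k H) (Coalgebra.comul (R := k))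
        (HopfAlgebra.antipode (R := k)) act ∘ₗ (ρM.lTensor H)).lTensor C)
      ∘ₗ asc k C H M ∘ₗ (ρC.rTensor M)

/-- `M` is an `H^C`-SAYD module for the right `H`-comodule (coalgebra) `C` :
the `H^C`-AYD condition holds, and the stability condition
`d̃₍₀₎ ⊗ m · d̃₍₁₎ = d̃ ⊗ m` holds on the cotensor product `C^{⊗(n+1)} □_H M`. -/
def IsHCSAYD (ρC : C →ₗ[k] C ⊗[k] H) (ρM : M →ₗ[k] H ⊗[k] M)
    (act : M ⊗[k] H →ₗ[k] M) : Prop :=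
  AYDcondC k ρC ρM act
  ∧ ∀ n : ℕ, ∀ x ∈ LinearMap.ker
      (cotensorDefect k (TpowρR k (LinearMap.mul' k H) ρC (n + 1)) ρM),
      stabMapC k (TpowρR k (LinearMap.mul' k H) ρC (n + 1)) act x = x

/-- the cyclic operator `τₙ` on `C^{⊗(n+1)} ⊗ M`:
`c₀ ⊗ ⋯ ⊗ cₙ ⊗ m ↦ c₁ ⊗ ⋯ ⊗ cₙ ⊗ c₀₍₀₎ ⊗ m · c₀₍₁₎`. -/
def tauC (ρC : C →ₗ[k] C ⊗[k] H) (act : M ⊗[k] H →ₗ[k] M) (n : ℕ) :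
    ((Tpow k C (n+1) : Type) ⊗[k] M) →ₗ[k] ((Tpow k C (n+1) : Type) ⊗[k] M) :=
  letI W : Type := (Tpow k C n : Type)
  (((epow k C n).symm.toLinearMap).rTensor M)
    ∘ₗ ((act ∘ₗ cmm k H M).lTensor (W ⊗[k] C))
    ∘ₗ asc k (W ⊗[k] C) H M
    ∘ₗ ((ascs k W C H).rTensor M)
    ∘ₗ ((cmm k (C ⊗[k] H) W).rTensor M)
    ∘ₗ ((ρC.rTensor W).rTensor M)

/-- `M` is an `H^C`-HCC (Hopf cyclic coefficients) for the right `H`-comodule coalgebra `C` :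
the cyclic operator `τₙ` is well defined on the cotensor product `C^{⊗(n+1)} □_H M`
(so the whole cocyclic structure is well defined) and satisfies `τₙ^{n+1} = id` on it,
making `C^{⊗(n+1)} □_H M` a cocyclic module. -/
def IsHCHCC (ρC : C →ₗ[k] C ⊗[k] H) (ρM : M →ₗ[k] H ⊗[k] M)
    (act : M ⊗[k] H →ₗ[k] M) : Prop :=
  ∀ n : ℕ, ∀ x ∈ LinearMap.ker
      (cotensorDefect k (TpowρR k (LinearMap.mul' k H) ρC (n + 1)) ρM),
    tauC k ρC act n x ∈ LinearMap.ker
      (cotensorDefect k (TpowρR k (LinearMap.mul' k H) ρC (n + 1)) ρM)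
    ∧ (tauC k ρC act n)^[n+1] x = x

end CotensorSide

section CommCocommCond
variable {H : Type} [AddCommGroup H] [Module k H]
variable {A C W : Type} [AddCommGroup A] [Module k A] [AddCommGroup C] [Module k C]
  [AddCommGroup W] [Module k W]

/-- auxiliary map `(x ⊗ y) ⊗ z ↦ (z * x) ⊗ y`. -/
def muL (μ : H ⊗[k] H →ₗ[k] H) : (H ⊗[k] H) ⊗[k] H →ₗ[k] H ⊗[k] H :=
  (μ.rTensor H) ∘ₗ ascs k H H H ∘ₗ cmm k (H ⊗[k] H) H

/-- auxiliary map `(x ⊗ y) ⊗ z ↦ (y * z) ⊗ x`. -/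
def muR (μ : H ⊗[k] H →ₗ[k] H) : (H ⊗[k] H) ⊗[k] H →ₗ[k] H ⊗[k] H :=
  cmm k H H ∘ₗ (μ.lTensor H) ∘ₗ asc k H H H

/-- auxiliary map `z ⊗ (x ⊗ y) ↦ (z * x) ⊗ y`. -/
def nuL (μ : H ⊗[k] H →ₗ[k] H) : H ⊗[k] (H ⊗[k] H) →ₗ[k] H ⊗[k] H :=
  (μ.rTensor H) ∘ₗ ascs k H H H

/-- auxiliary map `z ⊗ (x ⊗ y) ↦ (y * z) ⊗ x`. -/
def nuR (μ : H ⊗[k] H →ₗ[k] H) : H ⊗[k] (H ⊗[k] H) →ₗ[k] H ⊗[k] H :=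
  cmm k H H ∘ₗ (μ.lTensor H) ∘ₗ asc k H H H ∘ₗ cmm k H (H ⊗[k] H)

/-- `H` coacts *cocommutatively* on the pair `(A, W)` (`A` and `W` left `H`-comodules):
`w₍₋₁₎ a₍₋₁₎⁽¹⁾ ⊗ a₍₋₁₎⁽²⁾ ⊗ a₍₀₎ ⊗ w₍₀₎ = a₍₋₁₎⁽²⁾ w₍₋₁₎ ⊗ a₍₋₁₎⁽¹⁾ ⊗ a₍₀₎ ⊗ w₍₀₎`. -/
def CocommCondL (μ : H ⊗[k] H →ₗ[k] H) (Δ : H →ₗ[k] H ⊗[k] H)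
    (ρA : A →ₗ[k] H ⊗[k] A) (ρW : W →ₗ[k] H ⊗[k] W) : Prop :=
  letI base : A ⊗[k] W →ₗ[k] ((H ⊗[k] H) ⊗[k] H) ⊗[k] (A ⊗[k] W) :=
    mid4 k (H ⊗[k] H) A H W ∘ₗ (TensorProduct.map ((Δ.rTensor A) ∘ₗ ρA) ρW)
  ((muL k μ).rTensor (A ⊗[k] W)) ∘ₗ base = ((muR k μ).rTensor (A ⊗[k] W)) ∘ₗ base

/-- `H` coacts *cocommutatively* on the pair `(W, C)` (`W` and `C` right `H`-comodules):
`w₍₀₎ ⊗ c₍₀₎ ⊗ w₍₁₎ c₍₁₎⁽¹⁾ ⊗ c₍₁₎⁽²⁾ = w₍₀₎ ⊗ c₍₀₎ ⊗ c₍₁₎⁽²⁾ w₍₁₎ ⊗ c₍₁₎⁽¹⁾`. -/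
def CocommCondR (μ : H ⊗[k] H →ₗ[k] H) (Δ : H →ₗ[k] H ⊗[k] H)
    (ρW : W →ₗ[k] W ⊗[k] H) (ρC : C →ₗ[k] C ⊗[k] H) : Prop :=
  letI base : W ⊗[k] C →ₗ[k] (W ⊗[k] C) ⊗[k] (H ⊗[k] (H ⊗[k] H)) :=
    mid4 k W H C (H ⊗[k] H) ∘ₗ (TensorProduct.map ρW ((Δ.lTensor C) ∘ₗ ρC))
  ((nuL k μ).lTensor (W ⊗[k] C)) ∘ₗ base = ((nuR k μ).lTensor (W ⊗[k] C)) ∘ₗ base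

end CommCocommCond
section Bicross
variable (F U : Type) [Ring F] [HopfAlgebra k F] [Ring U] [HopfAlgebra k U]

/-- inclusion `F → F ⊗ U`, `f ↦ f ⊗ 1`. -/
def jF : F →ₗ[k] F ⊗[k] U := (TensorProduct.mk k F U).flip 1
/-- inclusion `U → F ⊗ U`, `u ↦ 1 ⊗ u`. -/
def jU : U →ₗ[k] F ⊗[k] U := TensorProduct.mk k F U 1

/-- the right coaction of `H = F ⋈ U` on `F`: `f ↦ f⁽¹⁾ ⊗ (f⁽²⁾ ⋈ 1)`. -/
def bcoactF : F →ₗ[k] F ⊗[k] (F ⊗[k] U) :=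
  ((jF k F U).lTensor F) ∘ₗ (Coalgebra.comul (R := k) (A := F))

variable {F U}
variable (α : U ⊗[k] F →ₗ[k] F) (ρU : U →ₗ[k] U ⊗[k] F)

/-- the multiplication of the bicrossed product `F ⋈ U`:
`(f ⋈ u)(g ⋈ v) = f (u⁽¹⁾ ▷ g) ⋈ u⁽²⁾ v`, where `▷` is the action `α`. -/
def bmul : (F ⊗[k] U) ⊗[k] (F ⊗[k] U) →ₗ[k] F ⊗[k] U :=
  letI lam : (F ⊗[k] U) ⊗[k] F →ₗ[k] F :=
    (LinearMap.mul' k F) ∘ₗ (α.lTensor F) ∘ₗ asc k F U F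
  (TensorProduct.map lam (LinearMap.mul' k U))
    ∘ₗ mid4 k (F ⊗[k] U) U F U
    ∘ₗ ((ascs k F U U).rTensor (F ⊗[k] U))
    ∘ₗ (((Coalgebra.comul (R := k) (A := U)).lTensor F).rTensor (F ⊗[k] U))

/-- the comultiplication of the bicrossed product `F ⋈ U`:
`Δ(f ⋈ u) = (f⁽¹⁾ ⋈ u⁽¹⁾₍₀₎) ⊗ (f⁽²⁾ u⁽¹⁾₍₁₎ ⋈ u⁽²⁾)`, where `u ↦ u₍₀₎ ⊗ u₍₁₎` is the
coaction `ρU` of `F` on `U`. -/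
def bcomul : (F ⊗[k] U) →ₗ[k] (F ⊗[k] U) ⊗[k] (F ⊗[k] U) :=
  letI w : F ⊗[k] (F ⊗[k] U) →ₗ[k] F ⊗[k] U :=
    ((opMul k F (LinearMap.mul' k F)).rTensor U) ∘ₗ ascs k F F U
  (w.lTensor (F ⊗[k] U))
    ∘ₗ asc k (F ⊗[k] U) F (F ⊗[k] U)
    ∘ₗ ((ascs k F U F).rTensor (F ⊗[k] U))
    ∘ₗ ((ρU.lTensor F).rTensor (F ⊗[k] U))
    ∘ₗ mid4 k F F U U
    ∘ₗ (TensorProduct.map (Coalgebra.comul (R := k) (A := F))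
          (Coalgebra.comul (R := k) (A := U)))

/-- the antipode of the bicrossed product `F ⋈ U`:
`S(f ⋈ u) = (1 ⋈ S_U(u₍₀₎)) · (S_F(f u₍₁₎) ⋈ 1)`. -/
def bS : (F ⊗[k] U) →ₗ[k] F ⊗[k] U :=
  bmul k α ∘ₗ (TensorProduct.map (jU k F U ∘ₗ (HopfAlgebra.antipode (R := k) (A := U)))
      (jF k F U ∘ₗ (HopfAlgebra.antipode (R := k) (A := F))
        ∘ₗ (opMul k F (LinearMap.mul' k F))))
    ∘ₗ asc k U F F
    ∘ₗ cmm k F (U ⊗[k] F)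
    ∘ₗ (ρU.lTensor F)

/-- the right coaction of `H = F ⋈ U` on `U`: `u ↦ u₍₀₎ ⊗ (u₍₁₎ ⋈ 1)`. -/
def bcoactU : U →ₗ[k] U ⊗[k] (F ⊗[k] U) :=
  ((jF k F U).lTensor U) ∘ₗ ρU

/-- `(F, U)` together with the action `α : U ⊗ F → F` and the coaction `ρU : U → U ⊗ F`
is a matched pair of Hopf algebras, so that the bicrossed product `F ⋈ U` (with
multiplication `bmul` and comultiplication `bcomul`) is a Hopf algebra:
`F` is a left `U`-module algebra, `U` is a right `F`-comodule coalgebra, and the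
Majid compatibility conditions hold. -/
def IsMatchedPair : Prop :=
  -- `α` is a left `U`-module structure on `F`
  (∀ f : F, α ((1 : U) ⊗ₜ[k] f) = f)
  ∧ (α ∘ₗ ((LinearMap.mul' k U).rTensor F) = α ∘ₗ (α.lTensor U) ∘ₗ asc k U U F)
  -- making `F` a `U`-module algebra
  ∧ (α ∘ₗ ((LinearMap.mul' k F).lTensor U)
      = (LinearMap.mul' k F) ∘ₗ (TensorProduct.map α α) ∘ₗ mid4 k U U F F
          ∘ₗ ((Coalgebra.comul (R := k) (A := U)).rTensor (F ⊗[k] F)))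
  ∧ (∀ u : U, α (u ⊗ₜ[k] (1 : F)) = (Coalgebra.counit (R := k) (A := U) u) • (1 : F))
  -- `ρU` is a right `F`-comodule structure on `U`
  ∧ IsCoassocR k ρU ∧ IsCounitalR k ρU
  -- making `U` an `F`-comodule coalgebra
  ∧ (((Coalgebra.comul (R := k) (A := U)).rTensor F) ∘ₗ ρU
      = ((LinearMap.mul' k F).lTensor (U ⊗[k] U)) ∘ₗ mid4 k U F U F
          ∘ₗ (TensorProduct.map ρU ρU) ∘ₗ (Coalgebra.comul (R := k) (A := U)))
  ∧ ((TensorProduct.lid k F).toLinearMap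
        ∘ₗ ((Coalgebra.counit (R := k) (A := U)).rTensor F) ∘ₗ ρU
      = (Algebra.linearMap k F) ∘ₗ (Coalgebra.counit (R := k) (A := U)))
  -- `ρU(1) = 1 ⊗ 1`
  ∧ (ρU 1 = (1 : U) ⊗ₜ[k] (1 : F))
  -- multiplicativity: `ρ(uv) = u⁽¹⁾₍₀₎ v₍₀₎ ⊗ u⁽¹⁾₍₁₎ (u⁽²⁾ ▷ v₍₁₎)`
  ∧ (ρU ∘ₗ (LinearMap.mul' k U)
      = letI ζ : (((U ⊗[k] F) ⊗[k] U) ⊗[k] F) →ₗ[k] U ⊗[k] F :=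
          (TensorProduct.map (LinearMap.mul' k U) (LinearMap.mul' k F))
            ∘ₗ asc k (U ⊗[k] U) F F
            ∘ₗ ((ascs k U U F ∘ₗ ((cmm k F U).lTensor U) ∘ₗ asc k U F U).rTensor F)
        ζ ∘ₗ (α.lTensor ((U ⊗[k] F) ⊗[k] U))
          ∘ₗ mid4 k (U ⊗[k] F) U U F
          ∘ₗ ((ρU.rTensor U).rTensor (U ⊗[k] F))
          ∘ₗ (TensorProduct.map (Coalgebra.comul (R := k) (A := U)) ρU))
  -- compatibility: `u⁽²⁾₍₀₎ ⊗ (u⁽¹⁾ ▷ f) u⁽²⁾₍₁₎ = u⁽¹⁾₍₀₎ ⊗ u⁽¹⁾₍₁₎ (u⁽²⁾ ▷ f)`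
  ∧ (((opMul k F (LinearMap.mul' k F)).lTensor U) ∘ₗ asc k U F F
        ∘ₗ (α.lTensor (U ⊗[k] F)) ∘ₗ asc k (U ⊗[k] F) U F
        ∘ₗ ((cmm k U (U ⊗[k] F)).rTensor F) ∘ₗ ((ρU.lTensor U).rTensor F)
        ∘ₗ ((Coalgebra.comul (R := k) (A := U)).rTensor F)
      = ((LinearMap.mul' k F).lTensor U) ∘ₗ asc k U F F
          ∘ₗ (α.lTensor (U ⊗[k] F)) ∘ₗ asc k (U ⊗[k] F) U F
          ∘ₗ ((ρU.rTensor U).rTensor F)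
          ∘ₗ ((Coalgebra.comul (R := k) (A := U)).rTensor F))
  -- compatibility: `Δ_F(u ▷ f) = (u⁽¹⁾₍₀₎ ▷ f⁽¹⁾) ⊗ u⁽¹⁾₍₁₎ (u⁽²⁾ ▷ f⁽²⁾)`
  ∧ ((Coalgebra.comul (R := k) (A := F)) ∘ₗ α
      = letI ξ : (U ⊗[k] F) ⊗[k] F →ₗ[k] F ⊗[k] F :=
          (α.rTensor F) ∘ₗ ascs k U F F ∘ₗ ((cmm k F F).lTensor U) ∘ₗ asc k U F F
        ((LinearMap.mul' k F).lTensor F) ∘ₗ asc k F F F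
          ∘ₗ (TensorProduct.map ξ α)
          ∘ₗ mid4 k (U ⊗[k] F) U F F
          ∘ₗ ((ρU.rTensor U).rTensor (F ⊗[k] F))
          ∘ₗ (TensorProduct.map (Coalgebra.comul (R := k) (A := U))
                (Coalgebra.comul (R := k) (A := F))))
  -- compatibility: `ε(u ▷ f) = ε(u) ε(f)`
  ∧ (∀ (u : U) (f : F),
      Coalgebra.counit (R := k) (α (u ⊗ₜ[k] f))
        = Coalgebra.counit (R := k) u * Coalgebra.counit (R := k) f)

end Bicross
section CrossedProduct
variable {H : Type} [Ring H] [Algebra k H]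
variable {A B : Type} [Ring A] [Algebra k A] [Ring B] [Algebra k B]

/-- the multiplication of the crossed product algebra `A ⋊ B` for a left `H`-module
algebra `A` (action `β`) and a left `H`-comodule algebra `B` (coaction `ρB`):
`(a ⋊ b)(a' ⋊ b') = a (b₍₋₁₎ · a') ⋊ b₍₀₎ b'`. -/
def crossMul (β : H ⊗[k] A →ₗ[k] A) (ρB : B →ₗ[k] H ⊗[k] B) :
    (A ⊗[k] B) ⊗[k] (A ⊗[k] B) →ₗ[k] A ⊗[k] B :=
  letI lam : (A ⊗[k] H) ⊗[k] A →ₗ[k] A :=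
    (LinearMap.mul' k A) ∘ₗ (β.lTensor A) ∘ₗ asc k A H A
  (TensorProduct.map lam (LinearMap.mul' k B))
    ∘ₗ mid4 k (A ⊗[k] H) B A B
    ∘ₗ ((ascs k A H B).rTensor (A ⊗[k] B))
    ∘ₗ ((ρB.lTensor A).rTensor (A ⊗[k] B))

end CrossedProduct

section SimplicialOps
variable {R : Type} [AddCommGroup R] [Module k R]

/-- the rotation `a₀ ⊗ ⋯ ⊗ aₙ ↦ aₙ ⊗ a₀ ⊗ ⋯ ⊗ aₙ₋₁` on `Tpow k R (n+1)`. -/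
def rot (n : ℕ) : (Tpow k R (n+1) : Type) →ₗ[k] (Tpow k R (n+1) : Type) :=
  cmm k (Tpow k R n : Type) R ∘ₗ (epow k R n).toLinearMap

/-- `merge μ n i` multiplies the `i`-th and `(i+1)`-st tensor factors of `Tpow k R (n+2)`
(for `0 ≤ i ≤ n`; values at out-of-range indices are junk). -/
def merge (μ : R ⊗[k] R →ₗ[k] R) :
    ∀ (n i : ℕ), (Tpow k R (n+2) : Type) →ₗ[k] (Tpow k R (n+1) : Type)
  | n, 0 => (μ.rTensor (Tpow k R n : Type)) ∘ₗ ascs k R R (Tpow k R n : Type)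
  | 0, _+1 => (μ.rTensor (Tpow k R 0 : Type)) ∘ₗ ascs k R R (Tpow k R 0 : Type)
  | n+1, i+1 => (merge μ n i).lTensor R

/-- `ins e n i` inserts the element `e` in position `i+1` of `Tpow k R (n+1)`
(for `0 ≤ i ≤ n`; values at out-of-range indices are junk). -/
def ins (e : R) : ∀ (n i : ℕ), (Tpow k R (n+1) : Type) →ₗ[k] (Tpow k R (n+2) : Type)
  | n, 0 => (TensorProduct.mk k R (Tpow k R n : Type) e).lTensor R
  | 0, _+1 => (TensorProduct.mk k R (Tpow k R 0 : Type) e).lTensor R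
  | n+1, i+1 => (ins e n i).lTensor R

/-- the `i`-th coface operator of the standard cocyclic module of an algebra `(R, μ)`
(on cochains `Hom(R^{⊗(n+1)}, V)`); `i = n+1` is the twisted last coface
`(δ_{n+1} f)(r₀ ⊗ ⋯ ⊗ r_{n+1}) = f(r_{n+1} r₀ ⊗ r₁ ⊗ ⋯ ⊗ rₙ)`. -/
def faceAlg {V : Type} [AddCommGroup V] [Module k V] (μ : R ⊗[k] R →ₗ[k] R) (n i : ℕ)
    (f : (Tpow k R (n+1) : Type) →ₗ[k] V) : (Tpow k R (n+2) : Type) →ₗ[k] V :=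
  if i = n+1 then f ∘ₗ merge k μ n 0 ∘ₗ rot k (n+1) else f ∘ₗ merge k μ n i

/-- the `i`-th codegeneracy operator of the standard cocyclic module of an algebra. -/
def degAlg {V : Type} [AddCommGroup V] [Module k V] (e : R) (n i : ℕ)
    (f : (Tpow k R (n+2) : Type) →ₗ[k] V) : (Tpow k R (n+1) : Type) →ₗ[k] V :=
  f ∘ₗ ins k e n i

/-- the cyclic operator of the standard cocyclic module of an algebra:
`(τₙ f)(r₀ ⊗ ⋯ ⊗ rₙ) = f(rₙ ⊗ r₀ ⊗ ⋯ ⊗ rₙ₋₁)`. -/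
def cycAlg {V : Type} [AddCommGroup V] [Module k V] (n : ℕ)
    (f : (Tpow k R (n+1) : Type) →ₗ[k] V) : (Tpow k R (n+1) : Type) →ₗ[k] V :=
  f ∘ₗ rot k n

/-- the Hochschild coboundary `b = Σ_{i=0}^{n+1} (-1)^i δᵢ` of the standard (twisted)
cocyclic module of an algebra `(R, μ)`. -/
def bAlg {V : Type} [AddCommGroup V] [Module k V] (μ : R ⊗[k] R →ₗ[k] R) (n : ℕ)
    (f : (Tpow k R (n+1) : Type) →ₗ[k] V) : (Tpow k R (n+2) : Type) →ₗ[k] V :=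
  ∑ i ∈ Finset.range (n+2), ((-1 : ℤ)^i) • faceAlg k μ n i f

end SimplicialOps
section ModAlgSide
variable {H : Type} [Ring H] [HopfAlgebra k H]
variable {A M : Type} [AddCommGroup A] [Module k A] [AddCommGroup M] [Module k M]

/-- the diagonal left action of `H` on `Tpow k A n` induced by a left action `β` on `A`:
`h · (a₁ ⊗ ⋯ ⊗ aₙ) = h⁽¹⁾·a₁ ⊗ ⋯ ⊗ h⁽ⁿ⁾·aₙ`. -/
def actTpow (β : H ⊗[k] A →ₗ[k] A) :
    ∀ n : ℕ, H ⊗[k] (Tpow k A n : Type) →ₗ[k] (Tpow k A n : Type)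
  | 0 => (TensorProduct.lid k k).toLinearMap
      ∘ₗ ((Coalgebra.counit (R := k) (A := H)).rTensor k)
  | n+1 => (TensorProduct.map β (actTpow β n)) ∘ₗ mid4 k H H A (Tpow k A n : Type)
      ∘ₗ ((Coalgebra.comul (R := k) (A := H)).rTensor (A ⊗[k] (Tpow k A n : Type)))

/-- the left action of `H` on `M ⊗ A^{⊗(n+1)}` used to define the HKRS cocyclic module
of a module algebra: `h · (m ⊗ ã) = m · S(h⁽¹⁾) ⊗ h⁽²⁾ · ã`. -/
def actMA (β : H ⊗[k] A →ₗ[k] A) (act : M ⊗[k] H →ₗ[k] M) (n : ℕ) :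
    H ⊗[k] (M ⊗[k] (Tpow k A (n+1) : Type)) →ₗ[k] M ⊗[k] (Tpow k A (n+1) : Type) :=
  letI w : H ⊗[k] M →ₗ[k] M :=
    act ∘ₗ cmm k H M ∘ₗ ((HopfAlgebra.antipode (R := k)).rTensor M)
  (TensorProduct.map w (actTpow k β (n+1)))
    ∘ₗ mid4 k H H M (Tpow k A (n+1) : Type)
    ∘ₗ ((Coalgebra.comul (R := k) (A := H)).rTensor (M ⊗[k] (Tpow k A (n+1) : Type)))

/-- `φ : M ⊗ A^{⊗(n+1)} → k` is `H`-equivariant (i.e. `φ ∈ Hom_H(M ⊗ A^{⊗(n+1)}, k)`),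
with `k` the trivial `H`-module. -/
def IsInvariantMA (β : H ⊗[k] A →ₗ[k] A) (act : M ⊗[k] H →ₗ[k] M) (n : ℕ)
    (φ : (M ⊗[k] (Tpow k A (n+1) : Type)) →ₗ[k] k) : Prop :=
  φ ∘ₗ actMA k β act n
    = φ ∘ₗ (TensorProduct.lid k (M ⊗[k] (Tpow k A (n+1) : Type))).toLinearMap
        ∘ₗ ((Coalgebra.counit (R := k) (A := H)).rTensor
              (M ⊗[k] (Tpow k A (n+1) : Type)))

/-- the twisted rotation on `M ⊗ A^{⊗(n+1)}`:
`m ⊗ a₀ ⊗ ⋯ ⊗ aₙ ↦ m₍₀₎ ⊗ S⁻¹(m₍₋₁₎)·aₙ ⊗ a₀ ⊗ ⋯ ⊗ aₙ₋₁`. -/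
def rotMA (β : H ⊗[k] A →ₗ[k] A) (Sinv : H →ₗ[k] H) (ρM : M →ₗ[k] H ⊗[k] M) (n : ℕ) :
    M ⊗[k] (Tpow k A (n+1) : Type) →ₗ[k] M ⊗[k] (Tpow k A (n+1) : Type) :=
  (TensorProduct.leftComm k A M (Tpow k A n : Type)).toLinearMap
    ∘ₗ ((β ∘ₗ (Sinv.rTensor A)).rTensor (M ⊗[k] (Tpow k A n : Type)))
    ∘ₗ mid4 k H M A (Tpow k A n : Type)
    ∘ₗ ((rot k n).lTensor (H ⊗[k] M))
    ∘ₗ (ρM.rTensor (Tpow k A (n+1) : Type))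

/-- the cyclic operator of the HKRS cocyclic module `C^n_H(A, M) = Hom_H(M ⊗ A^{⊗(n+1)}, k)`:
`(τₙ φ)(m ⊗ a₀ ⊗ ⋯ ⊗ aₙ) = φ(m₍₀₎ ⊗ S⁻¹(m₍₋₁₎)·aₙ ⊗ a₀ ⊗ ⋯ ⊗ aₙ₋₁)`. -/
def cycMA (β : H ⊗[k] A →ₗ[k] A) (Sinv : H →ₗ[k] H) (ρM : M →ₗ[k] H ⊗[k] M) (n : ℕ)
    (φ : (M ⊗[k] (Tpow k A (n+1) : Type)) →ₗ[k] k) :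
    (M ⊗[k] (Tpow k A (n+1) : Type)) →ₗ[k] k :=
  φ ∘ₗ rotMA k β Sinv ρM n


/-- `M` is an `_A H`-SAYD coefficient module for the left `H`-module algebra `A` (in the
generalized sense): the cyclic operator of the HKRS cocyclic module
`C^n_H(A,M) = Hom_H(M ⊗ A^{⊗(n+1)}, k)` is well defined on equivariant cochains and
satisfies `τₙ^{n+1} = id`. -/
def IsMASAYD (β : H ⊗[k] A →ₗ[k] A) (Sinv : H →ₗ[k] H) (ρM : M →ₗ[k] H ⊗[k] M)
    (act : M ⊗[k] H →ₗ[k] M) : Prop :=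
  ∀ n : ℕ, ∀ φ : (M ⊗[k] (Tpow k A (n+1) : Type)) →ₗ[k] k,
    IsInvariantMA k β act n φ →
      IsInvariantMA k β act n (cycMA k β Sinv ρM n φ)
      ∧ (cycMA k β Sinv ρM n)^[n+1] φ = φ

end ModAlgSide

section ModAlgSideRing
variable {H : Type} [Ring H] [HopfAlgebra k H]
variable {A M : Type} [Ring A] [Algebra k A] [AddCommGroup M] [Module k M]

/-- the `i`-th coface of the HKRS cocyclic module `C^n_H(A, M)`; `i = n+1` is the twisted
last coface `(δ_{n+1} φ)(m ⊗ a₀ ⊗ ⋯ ⊗ a_{n+1}) = φ(m₍₀₎ ⊗ (S⁻¹(m₍₋₁₎)·a_{n+1}) a₀ ⊗ ⋯ ⊗ aₙ)`. -/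
def faceMA (β : H ⊗[k] A →ₗ[k] A) (Sinv : H →ₗ[k] H) (ρM : M →ₗ[k] H ⊗[k] M)
    (n i : ℕ) (φ : (M ⊗[k] (Tpow k A (n+1) : Type)) →ₗ[k] k) :
    (M ⊗[k] (Tpow k A (n+2) : Type)) →ₗ[k] k :=
  if i = n+1 then
    φ ∘ₗ ((merge k (LinearMap.mul' k A) n 0).lTensor M) ∘ₗ rotMA k β Sinv ρM (n+1)
  else φ ∘ₗ ((merge k (LinearMap.mul' k A) n i).lTensor M)

/-- the `i`-th codegeneracy of the HKRS cocyclic module `C^n_H(A, M)`. -/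
def degMA (n i : ℕ) (φ : (M ⊗[k] (Tpow k A (n+2) : Type)) →ₗ[k] k) :
    (M ⊗[k] (Tpow k A (n+1) : Type)) →ₗ[k] k :=
  φ ∘ₗ ((ins k (1 : A) n i).lTensor M)

/-- the Hochschild coboundary of the HKRS cocyclic module `C^n_H(A, M)`. -/
def bMA (β : H ⊗[k] A →ₗ[k] A) (Sinv : H →ₗ[k] H) (ρM : M →ₗ[k] H ⊗[k] M)
    (n : ℕ) (φ : (M ⊗[k] (Tpow k A (n+1) : Type)) →ₗ[k] k) :
    (M ⊗[k] (Tpow k A (n+2) : Type)) →ₗ[k] k :=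
  ∑ i ∈ Finset.range (n+2), ((-1 : ℤ)^i) • faceMA k β Sinv ρM n i φ

end ModAlgSideRing

section ComodAlgSide
variable {H : Type} [Ring H] [HopfAlgebra k H]
variable {B M : Type} [Ring B] [Algebra k B] [AddCommGroup M] [Module k M]

/-- the `i`-th coface of the cocyclic module `C^n_H(B, M) = Hom^H(B^{⊗(n+1)}, M)` of a left
`H`-comodule algebra `B`; `i = n+1` is the twisted last coface
`(δ_{n+1} f)(b₀ ⊗ ⋯ ⊗ b_{n+1}) = f(b_{n+1}₍₀₎ b₀ ⊗ b₁ ⊗ ⋯ ⊗ bₙ) · b_{n+1}₍₋₁₎`. -/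
def faceCB (ρB : B →ₗ[k] H ⊗[k] B) (act : M ⊗[k] H →ₗ[k] M) (n i : ℕ)
    (f : (Tpow k B (n+1) : Type) →ₗ[k] M) : (Tpow k B (n+2) : Type) →ₗ[k] M :=
  if i = n+1 then
    act ∘ₗ cmm k H M ∘ₗ ((f ∘ₗ merge k (LinearMap.mul' k B) n 0).lTensor H)
      ∘ₗ rotρL k ρB (n+1)
  else f ∘ₗ merge k (LinearMap.mul' k B) n i

/-- the `i`-th codegeneracy of `C^n_H(B, M)`. -/
def degCB (n i : ℕ) (f : (Tpow k B (n+2) : Type) →ₗ[k] M) :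
    (Tpow k B (n+1) : Type) →ₗ[k] M :=
  f ∘ₗ ins k (1 : B) n i

/-- the Hochschild coboundary of `C^n_H(B, M)`. -/
def bCB (ρB : B →ₗ[k] H ⊗[k] B) (act : M ⊗[k] H →ₗ[k] M) (n : ℕ)
    (f : (Tpow k B (n+1) : Type) →ₗ[k] M) : (Tpow k B (n+2) : Type) →ₗ[k] M :=
  ∑ i ∈ Finset.range (n+2), ((-1 : ℤ)^i) • faceCB k ρB act n i f

end ComodAlgSide
section PsiSec
variable {H : Type} [Ring H] [HopfAlgebra k H]
variable {A B M : Type} [AddCommGroup A] [Module k A] [AddCommGroup B] [Module k B]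
  [AddCommGroup M] [Module k M]

/-- the auxiliary "unzipping" map `(A ⊗ B)^{⊗ n} → H ⊗ (A^{⊗ n} ⊗ B^{⊗ n})` underlying the
cup-product map `Ψ`:
`(a₀ ⊗ b₀) ⊗ ⋯ ⊗ (aₙ ⊗ bₙ) ↦ b₀₍₋₁₎ ⋯ bₙ₍₋₁₎ ⊗
  ((S⁻¹(b₀₍₋₁₎ ⋯ bₙ₍₋₁₎)·a₀ ⊗ S⁻¹(b₁₍₋₁₎ ⋯ bₙ₍₋₁₎)·a₁ ⊗ ⋯) ⊗ (b₀₍₀₎ ⊗ ⋯ ⊗ bₙ₍₀₎))`. -/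
def Gmap (β : H ⊗[k] A →ₗ[k] A) (Sinv : H →ₗ[k] H) (ρB : B →ₗ[k] H ⊗[k] B) :
    ∀ n : ℕ, (Tpow k (A ⊗[k] B) n : Type) →ₗ[k]
      H ⊗[k] ((Tpow k A n : Type) ⊗[k] (Tpow k B n : Type))
  | 0 => (TensorProduct.mk k H (k ⊗[k] k) 1) ∘ₗ ((TensorProduct.mk k k k).flip 1)
  | n+1 =>
    letI TA : Type := (Tpow k A n : Type)
    letI TB : Type := (Tpow k B n : Type)
    letI inner : (H ⊗[k] (A ⊗[k] B)) ⊗[k] (H ⊗[k] (TA ⊗[k] TB)) →ₗ[k]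
        (A ⊗[k] TA) ⊗[k] (B ⊗[k] TB) :=
      (((β.rTensor TA) ∘ₗ ascs k H A TA).rTensor (B ⊗[k] TB))
        ∘ₗ ascs k H (A ⊗[k] TA) (B ⊗[k] TB)
        ∘ₗ ((mid4 k A B TA TB).lTensor H)
        ∘ₗ ((Sinv ∘ₗ LinearMap.mul' k H).rTensor ((A ⊗[k] B) ⊗[k] (TA ⊗[k] TB)))
        ∘ₗ mid4 k H (A ⊗[k] B) H (TA ⊗[k] TB)
    (inner.lTensor H)
      ∘ₗ ((LinearMap.mul' k H).rTensor
            ((H ⊗[k] (A ⊗[k] B)) ⊗[k] (H ⊗[k] (TA ⊗[k] TB))))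
      ∘ₗ mid4 k H (H ⊗[k] (A ⊗[k] B)) H (H ⊗[k] (TA ⊗[k] TB))
      ∘ₗ (TensorProduct.map
            (((TensorProduct.leftComm k A H B).toLinearMap.lTensor H)
              ∘ₗ (TensorProduct.leftComm k A H (H ⊗[k] B)).toLinearMap)
            (asc k H H (TA ⊗[k] TB)))
      ∘ₗ ((((Coalgebra.comul (R := k) (A := H)).rTensor (TA ⊗[k] TB)).lTensor
            (A ⊗[k] (H ⊗[k] (H ⊗[k] B)))))
      ∘ₗ ((((ρB.lTensor H ∘ₗ ρB).lTensor A)).rTensor (H ⊗[k] (TA ⊗[k] TB)))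
      ∘ₗ ((Gmap β Sinv ρB n).lTensor (A ⊗[k] B))

/-- the cup-product cochain map
`Ψ(φ ⊗ ψ)(a₀ ⋊ b₀ ⊗ ⋯ ⊗ aₙ ⋊ bₙ)
  = φ(ψ(b₀₍₀₎ ⊗ ⋯ ⊗ bₙ₍₀₎) ⊗ S⁻¹(b₀₍₋₁₎ ⋯ bₙ₍₋₁₎)·a₀ ⊗ ⋯ ⊗ S⁻¹(bₙ₍₋₁₎)·aₙ)`. -/
def Psi (β : H ⊗[k] A →ₗ[k] A) (Sinv : H →ₗ[k] H) (ρB : B →ₗ[k] H ⊗[k] B) (n : ℕ)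
    (φ : (M ⊗[k] (Tpow k A (n+1) : Type)) →ₗ[k] k)
    (ψ : (Tpow k B (n+1) : Type) →ₗ[k] M) :
    (Tpow k (A ⊗[k] B) (n+1) : Type) →ₗ[k] k :=
  φ ∘ₗ cmm k (Tpow k A (n+1) : Type) M
    ∘ₗ (ψ.lTensor (Tpow k A (n+1) : Type))
    ∘ₗ (TensorProduct.lid k ((Tpow k A (n+1) : Type) ⊗[k] (Tpow k B (n+1) : Type))).toLinearMap
    ∘ₗ ((Coalgebra.counit (R := k) (A := H)).rTensor
          ((Tpow k A (n+1) : Type) ⊗[k] (Tpow k B (n+1) : Type)))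
    ∘ₗ Gmap k β Sinv ρB (n+1)

end PsiSec

section Casts
variable {R : Type} [AddCommGroup R] [Module k R]

/-- transport along an equality of tensor-power indices. -/
def tcast (R : Type) [AddCommGroup R] [Module k R] {m n : ℕ} (e : m = n) :
    (Tpow k R m : Type) →ₗ[k] (Tpow k R n : Type) := by
  subst e; exact LinearMap.id

end Casts

section Iterates
variable {H : Type} [Ring H] [HopfAlgebra k H]

/-- iterated last coface on the HKRS complex `C^•_H(A,M)`, lifting a `p`-cochain to a
`(p+q)`-cochain (one factor of the Alexander--Whitney map). -/
def iterLastMA {A M : Type} [Ring A] [Algebra k A] [AddCommGroup M] [Module k M]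
    (β : H ⊗[k] A →ₗ[k] A) (Sinv : H →ₗ[k] H) (ρM : M →ₗ[k] H ⊗[k] M) (p : ℕ) :
    ∀ q : ℕ, ((M ⊗[k] (Tpow k A (p+1) : Type)) →ₗ[k] k) →
      ((M ⊗[k] (Tpow k A (p+q+1) : Type)) →ₗ[k] k)
  | 0, φ => φ
  | q+1, φ => faceMA k β Sinv ρM (p+q) (p+q+1) (iterLastMA β Sinv ρM p q φ)

/-- iterated zeroth coface on the complex `C^•_H(B,M)`, lifting a `q`-cochain to a
`(q+p)`-cochain (the other factor of the Alexander--Whitney map). -/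
def iterFace0CB {B M : Type} [Ring B] [Algebra k B] [AddCommGroup M] [Module k M]
    (ρB : B →ₗ[k] H ⊗[k] B) (act : M ⊗[k] H →ₗ[k] M) (q : ℕ) :
    ∀ p : ℕ, ((Tpow k B (q+1) : Type) →ₗ[k] M) → ((Tpow k B (q+p+1) : Type) →ₗ[k] M)
  | 0, ψ => ψ
  | p+1, ψ => faceCB k ρB act (q+p) 0 (iterFace0CB ρB act q p ψ)

/-- the cup product `⊔ = Ψ ∘ AW` of a `p`-cochain of `C^•_H(A,M)` and a `q`-cochain of
`C^•_H(B,M)`, a `(p+q)`-cochain of the cyclic complex of `A ⋊ B`. -/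
def cupAW {A B M : Type} [Ring A] [Algebra k A] [Ring B] [Algebra k B]
    [AddCommGroup M] [Module k M]
    (β : H ⊗[k] A →ₗ[k] A) (Sinv : H →ₗ[k] H) (ρB : B →ₗ[k] H ⊗[k] B)
    (ρM : M →ₗ[k] H ⊗[k] M) (act : M ⊗[k] H →ₗ[k] M) (p q : ℕ)
    (φ : (M ⊗[k] (Tpow k A (p+1) : Type)) →ₗ[k] k)
    (ψ : (Tpow k B (q+1) : Type) →ₗ[k] M) :
    (Tpow k (A ⊗[k] B) (p+q+1) : Type) →ₗ[k] k :=
  Psi k β Sinv ρB (p+q) (iterLastMA k β Sinv ρM p q φ)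
    ((iterFace0CB k ρB act q p ψ) ∘ₗ tcast k B (show p+q+1 = q+p+1 by omega))

end Iterates

/-!
Since the coaction of `^σk_δ` is `x ↦ σ ⊗ x`, both conditions reduce to identities for the
coefficients `a₍₋₁₎`. Stability is colinearity of `φ` followed by `δ(σ) = 1`. The AYD condition
amounts to `S_δ(a₍₋₁₎⁽²⁾) σ a₍₋₁₎⁽¹⁾ ⊗ a₍₀₎ = δ(a₍₋₁₎) σ ⊗ a₍₀₎`. By coassociativity of the
coaction, the involution condition may be applied to the first leg `a₍₋₁₎⁽¹⁾`; as `S_δ` is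
anti-multiplicative with `S_δ(h⁽¹⁾) h⁽²⁾ = δ(h) 1`, this turns the left side into
`S_δ(S_δ(h⁽¹⁾) h⁽²⁾) σ = δ(h) σ` with `h = a₍₋₁₎`.
-/

section TwistedAntipode
variable {k} {H : Type} [Ring H] [HopfAlgebra k H] (δ : H →ₐ[k] k)

open Coalgebra WithConv

lemma Sdelta_eq_sum {h : H} {ι : Type} (r : Repr k h ι) :
    Sdelta k δ h = ∑ i ∈ r.index, δ (r.left i) • HopfAlgebra.antipode k (r.right i) := by
  simp [Sdelta, ← r.eq, map_sum]

lemma Sdelta_one : Sdelta k δ (1 : H) = 1 := by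
  simp [Sdelta, Algebra.TensorProduct.one_def]

lemma Sdelta_mul_antidistrib (a b : H) : Sdelta k δ (a * b) = Sdelta k δ b * Sdelta k δ a := by
  let ra := ℛ k a
  let rb := ℛ k b
  rw [Sdelta_eq_sum δ (ra.mul rb), Sdelta_eq_sum δ ra, Sdelta_eq_sum δ rb,
    Finset.sum_mul_sum, Finset.sum_comm, Coalgebra.Repr.mul_index, Finset.sum_product]
  refine Finset.sum_congr rfl fun i _ => Finset.sum_congr rfl fun j _ => ?_
  simp [HopfAlgebra.antipode_mul_antidistrib, smul_smul]

lemma toConv_Sdelta :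
    toConv (Sdelta k δ) =
      toConv (Algebra.linearMap k H ∘ₗ δ.toLinearMap) * toConv (HopfAlgebra.antipode k) := by
  ext h
  rw [(ℛ k h).convMul_apply, Sdelta_eq_sum δ (ℛ k h)]
  simp [Algebra.smul_def]

lemma Sdelta_convMul_id :
    toConv (Sdelta k δ) * toConv LinearMap.id =
      toConv (Algebra.linearMap k H ∘ₗ δ.toLinearMap) := by
  rw [toConv_Sdelta, mul_assoc, LinearMap.antipode_mul_id, mul_one]

lemma sum_Sdelta_mul_eq_algebraMap {h : H} {ι : Type} (r : Repr k h ι) :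
    ∑ i ∈ r.index, Sdelta k δ (r.left i) * r.right i = algebraMap k H (δ h) := by
  have := r.convMul_apply (toConv (Sdelta k δ)) (toConv LinearMap.id)
  rw [Sdelta_convMul_id] at this
  exact this.symm

end TwistedAntipode

section Coaction
variable {k} {H : Type} [Ring H] [Bialgebra k H]
variable {V : Type} [AddCommGroup V] [Module k V]

open Coalgebra

lemma rTensor_comul_comp_eq_of_rTensor_comp_eq {ρ : V →ₗ[k] H ⊗[k] V} (hρ : IsCoassocL k ρ)
    {θ : H →ₗ[k] H} (hθ : θ.rTensor V ∘ₗ ρ = ρ) :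
    (θ.rTensor H ∘ₗ comul).rTensor V ∘ₗ ρ = comul.rTensor V ∘ₗ ρ := by
  have hcomul : comul.rTensor V ∘ₗ ρ = ascs k H H V ∘ₗ ρ.lTensor H ∘ₗ ρ := by
    rw [hρ, ← LinearMap.comp_assoc, ← LinearEquiv.coe_trans, LinearEquiv.self_trans_symm,
      LinearEquiv.refl_toLinearMap, LinearMap.id_comp]
  have hnat : (θ.rTensor H).rTensor V ∘ₗ ascs k H H V ∘ₗ ρ.lTensor H
      = ascs k H H V ∘ₗ ρ.lTensor H ∘ₗ θ.rTensor V := by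
    have hassoc : (θ.rTensor H).rTensor V ∘ₗ ascs k H H V
        = ascs k H H V ∘ₗ θ.rTensor (H ⊗[k] V) := by
      ext; simp
    rw [← LinearMap.comp_assoc, hassoc, LinearMap.comp_assoc, LinearMap.rTensor_comp_lTensor,
      LinearMap.lTensor_comp_rTensor]
  calc (θ.rTensor H ∘ₗ comul).rTensor V ∘ₗ ρ
      = (θ.rTensor H).rTensor V ∘ₗ ascs k H H V ∘ₗ ρ.lTensor H ∘ₗ ρ := by
        rw [LinearMap.rTensor_comp, LinearMap.comp_assoc, hcomul]
    _ = ascs k H H V ∘ₗ ρ.lTensor H ∘ₗ θ.rTensor V ∘ₗ ρ := by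
        simp only [← LinearMap.comp_assoc] at hnat ⊢; rw [hnat]
    _ = comul.rTensor V ∘ₗ ρ := by rw [hθ, hcomul]

end Coaction

section ModularPair
variable {k} {H : Type} [Ring H] [HopfAlgebra k H] (δ : H →ₐ[k] k) (σ : H)

open Coalgebra

/-- Applied to `Δ h` this is `S_δ(h⁽²⁾) σ h⁽¹⁾`, the coefficient produced by the right-hand side
of the `^A H`-AYD condition for `^σk_δ`. -/
def twistedAd : H ⊗[k] H →ₗ[k] H :=
  LinearMap.mul' k H ∘ₗ TensorProduct.map (Sdelta k δ) (LinearMap.mulLeft k σ) ∘ₗ cmm k H H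

lemma Twist_comp_coactGrouplike :
    Twist k (LinearMap.mul' k H) comul (HopfAlgebra.antipode k) (actChar k δ)
        ∘ₗ (coactGrouplike k σ).lTensor H
      = (twistedAd δ σ ∘ₗ comul).rTensor k := by
  apply TensorProduct.ext'
  intro h c
  let r := ℛ k h
  simp only [Twist, actChar, coactGrouplike, coe_comp, LinearEquiv.coe_coe, Function.comp_apply,
    lTensor_tmul, mk_apply, rTensor_tmul, ← r.eq, map_sum, sum_tmul, tensorTensorTensorComm_tmul,
    twistedAd, Sdelta, comm_tmul, map_tmul, mulLeft_apply, mul'_apply]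
  refine Finset.sum_congr rfl fun i _ => ?_
  let r' := ℛ k (r.right i)
  simp only [opMul, coe_comp, LinearEquiv.coe_coe, Function.comp_apply, comm_tmul, mul'_apply,
    ← r'.eq, map_sum, sum_tmul, assoc_tmul, lTensor_tmul, AlgHom.toLinearMap_apply, lid_tmul,
    smul_eq_mul, rTensor_tmul, tmul_sum, assoc_symm_tmul, map_tmul, Finset.sum_mul,
    Algebra.smul_mul_assoc]
  refine Finset.sum_congr rfl fun j _ => ?_
  rw [TensorProduct.smul_tmul, smul_eq_mul, mul_comm]

lemma twistedAd_comp_rTensor_comul {σ' : H} (hσσ' : σ * σ' = 1) :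
    twistedAd δ σ ∘ₗ (LinearMap.mulLeft k σ' ∘ₗ LinearMap.mulRight k σ ∘ₗ Sdelta k δ
        ∘ₗ Sdelta k δ).rTensor H ∘ₗ comul
      = δ.toLinearMap.smulRight σ := by
  ext h
  let r := ℛ k h
  calc _ = ∑ i ∈ r.index,
        Sdelta k δ (r.right i) * (σ * (σ' * (Sdelta k δ (Sdelta k δ (r.left i)) * σ))) := by
        simp [twistedAd, ← r.eq, map_sum]
    _ = Sdelta k δ (∑ i ∈ r.index, Sdelta k δ (r.left i) * r.right i) * σ := by
        simp only [map_sum, Finset.sum_mul, Sdelta_mul_antidistrib]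
        refine Finset.sum_congr rfl fun i _ => ?_
        rw [← mul_assoc σ, hσσ', one_mul, mul_assoc]
    _ = δ h • σ := by
        rw [sum_Sdelta_mul_eq_algebraMap, Algebra.algebraMap_eq_smul_one, map_smul, Sdelta_one,
          smul_one_mul]

lemma coactGrouplike_comp_actChar :
    coactGrouplike k σ ∘ₗ actChar k δ ∘ₗ cmm k H k = (δ.toLinearMap.smulRight σ).rTensor k := by
  apply TensorProduct.ext'
  intro h c
  simp [coactGrouplike, actChar, TensorProduct.smul_tmul, mul_comm]

lemma actChar_comp_coactGrouplike (hδσ : δ σ = 1) :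
    actChar k δ ∘ₗ cmm k H k ∘ₗ coactGrouplike k σ = LinearMap.id := by
  ext
  simp [coactGrouplike, actChar, hδσ]

lemma rTensor_twistedAd_comul_comp_eq {A : Type} [AddCommGroup A] [Module k A]
    {ρA : A →ₗ[k] H ⊗[k] A} (hρA : IsCoassocL k ρA) {σ' : H} (hσσ' : σ * σ' = 1)
    (hinvolution : (LinearMap.mulLeft k σ' ∘ₗ LinearMap.mulRight k σ ∘ₗ Sdelta k δ
        ∘ₗ Sdelta k δ).rTensor A ∘ₗ ρA = ρA) :
    (twistedAd δ σ ∘ₗ comul).rTensor A ∘ₗ ρA = (δ.toLinearMap.smulRight σ).rTensor A ∘ₗ ρA := by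
  rw [LinearMap.rTensor_comp, LinearMap.comp_assoc,
    ← rTensor_comul_comp_eq_of_rTensor_comp_eq hρA hinvolution, ← LinearMap.comp_assoc,
    ← LinearMap.rTensor_comp, twistedAd_comp_rTensor_comul δ σ hσσ']

end ModularPair

section TensorBookkeeping
variable {k} {H H' A W M V : Type} [AddCommGroup H] [Module k H] [AddCommGroup H'] [Module k H']
  [AddCommGroup A] [Module k A] [AddCommGroup W] [Module k W] [AddCommGroup M] [Module k M]
  [AddCommGroup V] [Module k V]

lemma rTensor_comp_lTensor_comp_assoc (x : H →ₗ[k] H') (φ : A ⊗[k] W →ₗ[k] M)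
    (ψ : V →ₗ[k] H ⊗[k] A) :
    x.rTensor M ∘ₗ φ.lTensor H ∘ₗ asc k H A W ∘ₗ ψ.rTensor W
      = φ.lTensor H' ∘ₗ asc k H' A W ∘ₗ (x.rTensor A ∘ₗ ψ).rTensor W := by
  have hassoc : x.rTensor (A ⊗[k] W) ∘ₗ asc k H A W
      = asc k H' A W ∘ₗ (x.rTensor A).rTensor W := by
    ext; simp
  rw [← LinearMap.comp_assoc, LinearMap.rTensor_comp_lTensor, ← LinearMap.lTensor_comp_rTensor,
    LinearMap.comp_assoc, ← LinearMap.comp_assoc _ (asc k H A W), hassoc, LinearMap.comp_assoc,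
    LinearMap.rTensor_comp]

end TensorBookkeeping

theorem stmt0_general (k H A : Type) [Field k] [Ring H] [HopfAlgebra k H] [Ring A] [Algebra k A]
    (ρA : A →ₗ[k] H ⊗[k] A) (hA : IsComodAlgL k ρA)
    (δ : H →ₐ[k] k) (σ σ' : H)
    (hinv : σ * σ' = 1)
    (hmodular : δ σ = 1)
    (hinvolution :
      ((LinearMap.mulLeft k σ' ∘ₗ LinearMap.mulRight k σ ∘ₗ Sdelta k δ ∘ₗ Sdelta k δ).rTensor A)
          ∘ₗ ρA = ρA) :
    IsAHSAYDL k ρA (coactGrouplike k σ) (actChar k δ) := by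
  intro n φ hφ
  constructor
  · set coact := asc k H A (Tpow k A n) ∘ₗ ρA.rTensor (Tpow k A n)
    have hcoeff := rTensor_twistedAd_comul_comp_eq δ σ hA.1 hinv hinvolution
    calc (coactGrouplike k σ ∘ₗ actChar k δ ∘ₗ cmm k H k) ∘ₗ φ.lTensor H ∘ₗ coact
        = (δ.toLinearMap.smulRight σ).rTensor k ∘ₗ φ.lTensor H ∘ₗ coact := by
          rw [coactGrouplike_comp_actChar]
      _ = (twistedAd δ σ ∘ₗ Coalgebra.comul).rTensor k ∘ₗ φ.lTensor H ∘ₗ coact := by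
          rw [rTensor_comp_lTensor_comp_assoc, rTensor_comp_lTensor_comp_assoc, hcoeff]
      _ = (Twist k (LinearMap.mul' k H) Coalgebra.comul (HopfAlgebra.antipode k) (actChar k δ)
            ∘ₗ (coactGrouplike k σ).lTensor H) ∘ₗ φ.lTensor H ∘ₗ coact := by
          rw [Twist_comp_coactGrouplike]
      _ = _ := by rw [LinearMap.lTensor_comp]; rfl
  · calc ((actChar k δ ∘ₗ cmm k H k) ∘ₗ φ.lTensor H ∘ₗ TpowρL k (LinearMap.mul' k H) ρA (n + 1)
          : A ⊗[k] Tpow k A n →ₗ[k] k)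
        = (actChar k δ ∘ₗ cmm k H k ∘ₗ coactGrouplike k σ) ∘ₗ φ := congrArg _ hφ.symm
      _ = φ := by rw [actChar_comp_coactGrouplike δ σ hmodular, LinearMap.id_comp]

/-- If `(δ, σ)` is a modular pair in `^A H`-involution for the left
`H`-comodule algebra `A`, then `^σ k_δ` is an `^A H`-SAYD module. -/
theorem stmt0 (k H A : Type) [Field k] [Ring H] [HopfAlgebra k H] [Ring A] [Algebra k A]
    (ρA : A →ₗ[k] H ⊗[k] A) (hA : IsComodAlgL k ρA)
    (δ : H →ₐ[k] k) (σ σ' : H) (hσ : IsGrouplike k σ)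
    (hinv : σ * σ' = 1) (hinv' : σ' * σ = 1)
    (hmodular : δ σ = 1)
    (hinvolution :
      ((LinearMap.mulLeft k σ' ∘ₗ LinearMap.mulRight k σ ∘ₗ Sdelta k δ ∘ₗ Sdelta k δ).rTensor A)
          ∘ₗ ρA = ρA) :
    IsAHSAYDL k ρA (coactGrouplike k σ) (actChar k δ) :=
  stmt0_general k H A ρA hA δ σ σ' hinv hmodular hinvolution

end HCN
end
end

section
/- Let H be a Hopf algebra over a field k and A a left H-comodule algebra. If H coacts on A commutatively, i.e. for every n, every ã ∈ A^⊗(n+1) and every g ∈ H one has ã₍₀₎ ⊗ ã₍₋₁₎g = ã₍₀₎ ⊗ gã₍₋₁₎ (with respect to the diagonal coaction), then any left H-comodule M, endowed with the trivial right H-action m·h = ε(h)m, is an ^A H-SAYD module. -/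
/-! With the trivial action `m · h = ε(h) m` the anti-Yetter–Drinfeld twist collapses to
`h ⊗ g ⊗ m ↦ S(h⁽²⁾) g h⁽¹⁾ ⊗ m`. For an `H`-colinear `φ` the AYD condition at `a ⊗ b̃` then says
`S(a₍₋₁₎⁽²⁾) a₍₀₎₍₋₁₎ b̃₍₋₁₎ a₍₋₁₎⁽¹⁾ ⊗ φ(a₍₀₎₍₀₎ ⊗ b̃₍₀₎) = a₍₋₁₎ b̃₍₋₁₎ ⊗ φ(a₍₀₎ ⊗ b̃₍₀₎)`.
Commutativity of the coaction on `b̃` moves `a₍₋₁₎⁽¹⁾` to the left of `b̃₍₋₁₎`, and coassociativity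
turns the remaining `S(a₍₋₁₎⁽²⁾) a₍₀₎₍₋₁₎ a₍₋₁₎⁽¹⁾ ⊗ a₍₀₎₍₀₎` into
`S(a₍₋₁₎⁽²⁾) a₍₋₁₎⁽³⁾ a₍₋₁₎⁽¹⁾ ⊗ a₍₀₎ = a₍₋₁₎ ⊗ a₍₀₎`. Stability is counitality of the diagonal
coaction. -/

open TensorProduct LinearMap

noncomputable section
namespace HCN

variable (k : Type) [Field k]

section CoactionToolkit

variable {H : Type} [Ring H] [HopfAlgebra k H]
variable {V W : Type} [AddCommGroup V] [Module k V] [AddCommGroup W] [Module k W]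

def counitL (V : Type) [AddCommGroup V] [Module k V] : H ⊗[k] V →ₗ[k] V :=
  (TensorProduct.lid k V).toLinearMap ∘ₗ (Coalgebra.counit (R := k) (A := H)).rTensor V

@[simp] lemma counitL_tmul (h : H) (v : V) :
    counitL k V (h ⊗ₜ[k] v) = Coalgebra.counit (R := k) h • v := by
  simp [counitL]

lemma counitL_asc (u : H ⊗[k] V) (w : W) :
    counitL k (V ⊗[k] W) (asc k H V W (u ⊗ₜ[k] w)) = counitL k V u ⊗ₜ[k] w := by
  induction u using TensorProduct.induction_on with
  | zero => simp
  | tmul h v => simp [smul_tmul']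
  | add x y hx hy => simp only [add_tmul, map_add, hx, hy]

lemma counitL_comp_diagL (ρV : V →ₗ[k] H ⊗[k] V) (ρW : W →ₗ[k] H ⊗[k] W) :
    counitL k (V ⊗[k] W) ∘ₗ diagL k (LinearMap.mul' k H) ρV ρW
      = TensorProduct.map (counitL k V ∘ₗ ρV) (counitL k W ∘ₗ ρW) := by
  refine TensorProduct.ext' fun v w => ?_
  simp only [diagL, coe_comp, Function.comp_apply, map_tmul]
  induction ρV v using TensorProduct.induction_on with
  | zero => simp
  | add x y hx hy => simp only [add_tmul, map_add, hx, hy]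
  | tmul g v' =>
    induction ρW w using TensorProduct.induction_on with
    | zero => simp
    | add x y hx hy => simp only [tmul_add, map_add, hx, hy]
    | tmul h w' =>
      simp [Bialgebra.counit_mul, smul_tmul', mul_smul, smul_comm (Coalgebra.counit (R := k) g)]

lemma counitL_comp_TpowρL {A : Type} [AddCommGroup A] [Module k A] (ρA : A →ₗ[k] H ⊗[k] A)
    (hcu : IsCounitalL k ρA) :
    ∀ n, counitL k (Tpow k A n : Type) ∘ₗ TpowρL k (LinearMap.mul' k H) ρA n = LinearMap.id
  | 0 => LinearMap.ext fun (x : k) => by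
      change counitL k k ((1 : H) ⊗ₜ[k] x) = x
      simp
  | n + 1 => by
      have h := counitL_comp_diagL k ρA (TpowρL k (LinearMap.mul' k H) ρA n)
      rw [counitL_comp_TpowρL ρA hcu n] at h
      exact h.trans ((congrArg (TensorProduct.map · LinearMap.id) hcu).trans TensorProduct.map_id)

lemma trivAct_cmm_lTensor (φ : V →ₗ[k] W) (u : H ⊗[k] V) :
    trivAct k H W (Coalgebra.counit (R := k)) (cmm k H W (φ.lTensor H u)) = φ (counitL k V u) := by
  induction u using TensorProduct.induction_on with
  | zero => simp
  | tmul h v => simp [trivAct]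
  | add x y hx hy => simp only [map_add, hx, hy]

end CoactionToolkit

section AdjointAction

variable {H : Type} [Ring H] [HopfAlgebra k H]
variable {X Y : Type} [AddCommGroup X] [Module k X] [AddCommGroup Y] [Module k Y]

/-- `(x ⊗ y) ⊗ g ↦ S(y) g x`. -/
def antipodeConj : (H ⊗[k] H) ⊗[k] H →ₗ[k] H :=
  LinearMap.mul' k H ∘ₗ (HopfAlgebra.antipode k).rTensor H ∘ₗ
    (opMul k H (LinearMap.mul' k H)).lTensor H ∘ₗ asc k H H H ∘ₗ (cmm k H H).rTensor H

@[simp] lemma antipodeConj_tmul (x y g : H) :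
    antipodeConj k ((x ⊗ₜ[k] y) ⊗ₜ[k] g) = HopfAlgebra.antipode k y * (g * x) := by
  simp [antipodeConj, opMul]

lemma antipodeConj_assoc_symm (x : H) (t : H ⊗[k] H) :
    antipodeConj k ((TensorProduct.assoc k H H H).symm (x ⊗ₜ[k] t))
      = LinearMap.mul' k H ((HopfAlgebra.antipode k).rTensor H t) * x := by
  induction t using TensorProduct.induction_on with
  | zero => simp
  | tmul y g => simp [mul_assoc]
  | add s t hs ht => simp only [tmul_add, map_add, hs, ht, add_mul]

/-- `S(h⁽¹⁾⁽²⁾) h⁽²⁾ h⁽¹⁾⁽¹⁾ = h`, by coassociativity and `S(h⁽¹⁾) h⁽²⁾ = ε(h)`. -/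
lemma antipodeConj_rTensor_comul_comul (h : H) :
    antipodeConj k ((Coalgebra.comul (R := k)).rTensor H (Coalgebra.comul (R := k) h)) = h := by
  have key : antipodeConj k ∘ₗ (TensorProduct.assoc k H H H).symm.toLinearMap ∘ₗ
      (Coalgebra.comul (R := k)).lTensor H
        = (TensorProduct.rid k H).toLinearMap ∘ₗ (Coalgebra.counit (R := k)).lTensor H := by
    refine TensorProduct.ext' fun x y => ?_
    simp [antipodeConj_assoc_symm, Algebra.smul_def]
  simpa using LinearMap.congr_fun key (Coalgebra.comul (R := k) h)

/-- The anti-Yetter–Drinfeld twist for the trivial action, `h ⊗ (g ⊗ x) ↦ S(h⁽²⁾) g h⁽¹⁾ ⊗ x`. -/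
def adjAct (X : Type) [AddCommGroup X] [Module k X] : H ⊗[k] (H ⊗[k] X) →ₗ[k] H ⊗[k] X :=
  (antipodeConj k).rTensor X ∘ₗ ascs k (H ⊗[k] H) H X ∘ₗ
    (Coalgebra.comul (R := k)).rTensor (H ⊗[k] X)

lemma adjAct_tmul (h : H) (z : H ⊗[k] X) :
    adjAct k X (h ⊗ₜ[k] z)
      = (antipodeConj k).rTensor X (ascs k (H ⊗[k] H) H X (Coalgebra.comul (R := k) h ⊗ₜ[k] z)) :=
  rfl

lemma antipodeConj_rTensor_ascs_tmul (x y : H) (z : H ⊗[k] X) :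
    (antipodeConj k).rTensor X (ascs k (H ⊗[k] H) H X ((x ⊗ₜ[k] y) ⊗ₜ[k] z))
      = ((LinearMap.mulLeft k (HopfAlgebra.antipode k y) ∘ₗ LinearMap.mulRight k x).rTensor X) z := by
  induction z using TensorProduct.induction_on with
  | zero => simp
  | tmul g v => simp
  | add s t hs ht => simp only [tmul_add, map_add, hs, ht]

lemma adjAct_lTensor_lTensor (f : X →ₗ[k] Y) (z : H ⊗[k] (H ⊗[k] X)) :
    adjAct k Y ((f.lTensor H).lTensor H z) = f.lTensor H (adjAct k X z) := by
  induction z using TensorProduct.induction_on with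
  | zero => simp
  | add s t hs ht => simp only [map_add, hs, ht]
  | tmul h z =>
    simp only [lTensor_tmul, adjAct_tmul]
    induction Coalgebra.comul (R := k) h using TensorProduct.induction_on with
    | zero => simp
    | add s t hs ht => simp only [add_tmul, map_add, hs, ht]
    | tmul x y =>
      rw [antipodeConj_rTensor_ascs_tmul, antipodeConj_rTensor_ascs_tmul, ← LinearMap.comp_apply,
        ← LinearMap.comp_apply (f.lTensor H), rTensor_comp_lTensor, lTensor_comp_rTensor]

lemma adjAct_asc_rTensor_comul (z : H ⊗[k] X) :
    adjAct k X (asc k H H X ((Coalgebra.comul (R := k)).rTensor X z)) = z := by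
  induction z using TensorProduct.induction_on with
  | zero => simp
  | add s t hs ht => simp only [map_add, hs, ht]
  | tmul h x =>
    have hc : ∀ t : H ⊗[k] H, adjAct k X (asc k H H X (t ⊗ₜ[k] x))
        = (antipodeConj k ((Coalgebra.comul (R := k)).rTensor H t)) ⊗ₜ[k] x := by
      intro t
      induction t using TensorProduct.induction_on with
      | zero => simp
      | add s t hs ht => simp only [add_tmul, map_add, hs, ht]
      | tmul a b => rfl
    rw [rTensor_tmul, hc, antipodeConj_rTensor_comul_comul]

lemma adjAct_lTensor_coaction {V : Type} [AddCommGroup V] [Module k V] (ρ : V →ₗ[k] H ⊗[k] V)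
    (hco : IsCoassocL k ρ) (v : V) :
    adjAct k V (ρ.lTensor H (ρ v)) = ρ v := by
  have := LinearMap.congr_fun hco v
  simp only [coe_comp, Function.comp_apply] at this
  rw [this, adjAct_asc_rTensor_comul]

end AdjointAction

section CommutingCoaction

variable {H : Type} [Ring H] [HopfAlgebra k H]
variable {X W : Type} [AddCommGroup X] [Module k X] [AddCommGroup W] [Module k W]

/-- `g ⊗ x ↦ g p ⊗ (x ⊗ q)` for `P = p ⊗ q`. -/
def mulTensorRight (P : H ⊗[k] W) : H ⊗[k] X →ₗ[k] H ⊗[k] (X ⊗[k] W) :=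
  (LinearMap.mul' k H).rTensor (X ⊗[k] W) ∘ₗ mid4 k H X H W ∘ₗ
    (TensorProduct.mk k (H ⊗[k] X) (H ⊗[k] W)).flip P

lemma mulTensorRight_tmul (P : H ⊗[k] W) (g : H) (x : X) :
    mulTensorRight k P (g ⊗ₜ[k] x)
      = (TensorProduct.mk k X W x).lTensor H ((LinearMap.mulLeft k g).rTensor W P) := by
  induction P using TensorProduct.induction_on with
  | zero => simp [mulTensorRight]
  | tmul p q => simp [mulTensorRight]
  | add s t hs ht => simp_all [mulTensorRight]

lemma adjAct_lTensor_mulTensorRight (P : H ⊗[k] W)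
    (hP : ∀ g : H, (LinearMap.mulRight k g).rTensor W P = (LinearMap.mulLeft k g).rTensor W P)
    (z : H ⊗[k] (H ⊗[k] X)) :
    adjAct k (X ⊗[k] W) ((mulTensorRight k P).lTensor H z) = mulTensorRight k P (adjAct k X z) := by
  induction z using TensorProduct.induction_on with
  | zero => simp
  | add s t hs ht => simp only [map_add, hs, ht]
  | tmul h z =>
    induction z using TensorProduct.induction_on with
    | zero => simp
    | add s t hs ht => simp only [tmul_add, map_add, hs, ht]
    | tmul g x =>
      simp only [lTensor_tmul, adjAct_tmul]
      induction Coalgebra.comul (R := k) h using TensorProduct.induction_on with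
      | zero => simp
      | add s t hs ht => simp only [add_tmul, map_add, hs, ht]
      | tmul a b =>
        rw [antipodeConj_rTensor_ascs_tmul, antipodeConj_rTensor_ascs_tmul, rTensor_tmul,
          mulTensorRight_tmul, mulTensorRight_tmul]
        set Sb := HopfAlgebra.antipode k b
        -- `hP a` is where commutativity enters: `a = h⁽¹⁾` passes the `H`-leg of `P`.
        have hmove : (LinearMap.mulLeft k Sb ∘ₗ LinearMap.mulRight k a).rTensor W
              ((LinearMap.mulLeft k g).rTensor W P)
            = (LinearMap.mulLeft k (Sb * (g * a))).rTensor W P := by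
          have hcomm : LinearMap.mulRight k a ∘ₗ LinearMap.mulLeft k g
              = LinearMap.mulLeft k g ∘ₗ LinearMap.mulRight k a :=
            (LinearMap.commute_mulLeft_right g a).eq.symm
          simp only [LinearMap.mulLeft_mul, rTensor_comp, comp_apply, ← hP a]
          rw [← comp_apply (rTensor W (LinearMap.mulRight k a)), ← rTensor_comp, hcomm,
            rTensor_comp, comp_apply]
        rw [← comp_apply (rTensor (X ⊗[k] W) _), rTensor_comp_lTensor, ← lTensor_comp_rTensor,
          comp_apply, hmove]
        rfl

def IsCommCoaction (ρ : W →ₗ[k] H ⊗[k] W) : Prop :=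
  ∀ g : H, (LinearMap.mulRight k g).rTensor W ∘ₗ ρ = (LinearMap.mulLeft k g).rTensor W ∘ₗ ρ

lemma diagL_tmul (ρX : X →ₗ[k] H ⊗[k] X) (ρW : W →ₗ[k] H ⊗[k] W) (x : X) (w : W) :
    diagL k (LinearMap.mul' k H) ρX ρW (x ⊗ₜ[k] w) = mulTensorRight k (ρW w) (ρX x) :=
  rfl

lemma adjAct_comp_diagL (ρX : X →ₗ[k] H ⊗[k] X) (hco : IsCoassocL k ρX)
    (ρW : W →ₗ[k] H ⊗[k] W) (hW : IsCommCoaction k ρW) :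
    adjAct k (X ⊗[k] W) ∘ₗ (diagL k (LinearMap.mul' k H) ρX ρW).lTensor H ∘ₗ
        asc k H X W ∘ₗ ρX.rTensor W
      = diagL k (LinearMap.mul' k H) ρX ρW := by
  refine TensorProduct.ext' fun x w => ?_
  have hpull : ∀ u : H ⊗[k] X, (diagL k (LinearMap.mul' k H) ρX ρW).lTensor H
      (asc k H X W (u ⊗ₜ[k] w)) = (mulTensorRight k (ρW w)).lTensor H (ρX.lTensor H u) := by
    intro u
    induction u using TensorProduct.induction_on with
    | zero => simp
    | tmul h x' => rfl
    | add s t hs ht => simp only [add_tmul, map_add, hs, ht]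
  simp only [coe_comp, Function.comp_apply, rTensor_tmul]
  rw [hpull, adjAct_lTensor_mulTensorRight k _ (fun g => LinearMap.congr_fun (hW g) w),
    adjAct_lTensor_coaction k ρX hco, diagL_tmul]

lemma isCommCoaction_TpowρL {H A : Type} [Ring H] [HopfAlgebra k H] [AddCommGroup A] [Module k A]
    (ρA : A →ₗ[k] H ⊗[k] A)
    (hcomm : ∀ n, IsCommCoaction k (TpowρL k (LinearMap.mul' k H) ρA (n + 1))) :
    ∀ n, IsCommCoaction k (TpowρL k (LinearMap.mul' k H) ρA n)
  | 0 => fun g => LinearMap.ext fun (x : k) => by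
      change (LinearMap.mulRight k g).rTensor k ((1 : H) ⊗ₜ[k] x)
        = (LinearMap.mulLeft k g).rTensor k ((1 : H) ⊗ₜ[k] x)
      simp
  | n + 1 => hcomm n

end CommutingCoaction

section TrivialAction

variable {H : Type} [Ring H] [HopfAlgebra k H]
variable {M : Type} [AddCommGroup M] [Module k M]

lemma rTensor_antipode_trivAct (t : H ⊗[k] H) (m : M) :
    (HopfAlgebra.antipode k).rTensor M
      ((trivAct k H M (Coalgebra.counit (R := k)) ∘ₗ cmm k H M).lTensor H
        (TensorProduct.assoc k H H M (TensorProduct.comm k H H t ⊗ₜ[k] m)))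
      = HopfAlgebra.antipode k (counitL k H t) ⊗ₜ[k] m := by
  induction t using TensorProduct.induction_on with
  | zero => simp
  | add s t hs ht => simp only [map_add, add_tmul, hs, ht]
  | tmul a b => simp [trivAct, smul_tmul', tmul_smul]

lemma twist_trivAct :
    Twist k (LinearMap.mul' k H) (Coalgebra.comul (R := k)) (HopfAlgebra.antipode k)
      (trivAct k H M (Coalgebra.counit (R := k))) = adjAct k M := by
  refine TensorProduct.ext' fun h z => ?_
  induction z using TensorProduct.induction_on with
  | zero => simp
  | add s t hs ht => simp only [tmul_add, map_add, hs, ht]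
  | tmul g m =>
    simp only [Twist, adjAct, coe_comp, Function.comp_apply, LinearEquiv.coe_coe, rTensor_tmul]
    induction Coalgebra.comul (R := k) h using TensorProduct.induction_on with
    | zero => simp
    | add s t hs ht => simp only [add_tmul, map_add, hs, ht]
    | tmul x y =>
      simp only [lTensor_tmul, LinearEquiv.coe_coe, tensorTensorTensorComm_tmul, rTensor_tmul,
        coe_comp, Function.comp_apply]
      rw [rTensor_antipode_trivAct]
      simp [opMul, counitL]

end TrivialAction

section SAYD

variable {H : Type} [Ring H] [HopfAlgebra k H]
variable {A V W M : Type} [AddCommGroup A] [Module k A] [AddCommGroup V] [Module k V]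
  [AddCommGroup W] [Module k W] [AddCommGroup M] [Module k M]

lemma stabCondL_trivAct (ρV : V →ₗ[k] H ⊗[k] V) (hV : counitL k V ∘ₗ ρV = LinearMap.id)
    (φ : V →ₗ[k] M) : StabCondL k ρV (trivAct k H M (Coalgebra.counit (R := k))) φ := by
  refine LinearMap.ext fun v => ?_
  simp only [coe_comp, Function.comp_apply, trivAct_cmm_lTensor]
  rw [← LinearMap.comp_apply (counitL k V), hV, LinearMap.id_apply]

lemma aydCondL_trivAct (ρA : A →ₗ[k] H ⊗[k] A) (hco : IsCoassocL k ρA) (hcu : IsCounitalL k ρA)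
    (ρW : W →ₗ[k] H ⊗[k] W) (hW : IsCommCoaction k ρW) (ρM : M →ₗ[k] H ⊗[k] M)
    (φ : A ⊗[k] W →ₗ[k] M) (hφ : IsColinL k (diagL k (LinearMap.mul' k H) ρA ρW) ρM φ) :
    AYDcondL k ρA ρM (trivAct k H M (Coalgebra.counit (R := k))) φ := by
  refine TensorProduct.ext' fun a w => ?_
  have hδ := LinearMap.congr_fun (adjAct_comp_diagL k ρA hco ρW hW) (a ⊗ₜ[k] w)
  have hρA : counitL k A (ρA a) = a := LinearMap.congr_fun hcu a
  simp only [coe_comp, Function.comp_apply, rTensor_tmul] at hδ ⊢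
  rw [trivAct_cmm_lTensor, counitL_asc, hρA, twist_trivAct, hφ, lTensor_comp, comp_apply,
    adjAct_lTensor_lTensor, hδ]
  exact LinearMap.congr_fun hφ (a ⊗ₜ[k] w)

end SAYD

theorem stmt4_general (k H A M : Type) [Field k] [Ring H] [HopfAlgebra k H] [Ring A] [Algebra k A]
    [AddCommGroup M] [Module k M]
    (ρA : A →ₗ[k] H ⊗[k] A) (hA : IsComodAlgL k ρA)
    (ρM : M →ₗ[k] H ⊗[k] M)
    (hcomm : ∀ (n : ℕ) (g : H),
      ((LinearMap.mulRight k g).rTensor (Tpow k A (n+1) : Type))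
          ∘ₗ TpowρL k (LinearMap.mul' k H) ρA (n+1)
        = ((LinearMap.mulLeft k g).rTensor (Tpow k A (n+1) : Type))
            ∘ₗ TpowρL k (LinearMap.mul' k H) ρA (n+1)) :
    IsAHSAYDL k ρA ρM (trivAct k H M (Coalgebra.counit (R := k))) := by
  obtain ⟨hco, hcu, -, -⟩ := hA
  intro n φ hφ
  exact ⟨aydCondL_trivAct k ρA hco hcu _ (isCommCoaction_TpowρL k ρA hcomm n) ρM φ hφ,
    stabCondL_trivAct k _ (counitL_comp_TpowρL k ρA hcu (n + 1)) φ⟩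

/-- If `H` coacts commutatively on the left `H`-comodule algebra `A`
(diagonally on all tensor powers), then any left `H`-comodule `M` with the trivial right
action `m · h = ε(h) m` is an `^A H`-SAYD module. -/
theorem stmt4 (k H A M : Type) [Field k] [Ring H] [HopfAlgebra k H] [Ring A] [Algebra k A]
    [AddCommGroup M] [Module k M]
    (ρA : A →ₗ[k] H ⊗[k] A) (hA : IsComodAlgL k ρA)
    (ρM : M →ₗ[k] H ⊗[k] M) (hM1 : IsCoassocL k ρM) (hM2 : IsCounitalL k ρM)
    (hcomm : ∀ (n : ℕ) (g : H),
      ((LinearMap.mulRight k g).rTensor (Tpow k A (n+1) : Type))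
          ∘ₗ TpowρL k (LinearMap.mul' k H) ρA (n+1)
        = ((LinearMap.mulLeft k g).rTensor (Tpow k A (n+1) : Type))
            ∘ₗ TpowρL k (LinearMap.mul' k H) ρA (n+1)) :
    IsAHSAYDL k ρA ρM (trivAct k H M (Coalgebra.counit (R := k))) :=
  stmt4_general k H A M ρA hA ρM hcomm

end HCN
end
end
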